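/- arXiv:2109.05054 — 13 statements merged into one kernel-verified Lean document; each statement's English description precedes it below -/
import Mathlib

section
/- Let R be a commutative integral domain. Suppose there exist a linearly ordered set W whose strict order is well-founded and a function Φ : R → W such that for all a, b ∈ R with b ≠ 0 and with a and b generating the unit ideal (i.e., there exist x, y ∈ R with a·x + b·y = 1), there exists q ∈ R with Φ(a − b·q) < Φ(b). Then the special linear group SL(2,R) is generated by its upper triangular and lower triangular matrices; that is, the subgroup of SL(2,R) generated by the set of matrices that are upper or lower triangular is all of SL(2,R). -/
/-- If a commutative integral domain `R` admits a "semi-Euclidean stathm"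
`Φ : R → W` into a linearly ordered set with well-founded strict order (the division
condition only being required for coprime pairs), then `SL(2,R)` is generated by its
upper and lower triangular matrices. -/
theorem sl2_generated_by_triangular_of_semiEuclidean
    (R : Type*) [CommRing R] [IsDomain R]
    (W : Type*) [LinearOrder W] (hW : WellFounded ((· < ·) : W → W → Prop))
    (Φ : R → W)
    (hΦ : ∀ a b : R, b ≠ 0 → (∃ x y : R, a * x + b * y = 1) →
      ∃ q : R, Φ (a - b * q) < Φ b) :
    Subgroup.closure
      {M : Matrix.SpecialLinearGroup (Fin 2) R |
        (M : Matrix (Fin 2) (Fin 2) R) 1 0 = 0 ∨ (M : Matrix (Fin 2) (Fin 2) R) 0 1 = 0}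
      = ⊤ := by
  set H := Subgroup.closure
      {M : Matrix.SpecialLinearGroup (Fin 2) R |
        (M : Matrix (Fin 2) (Fin 2) R) 1 0 = 0 ∨ (M : Matrix (Fin 2) (Fin 2) R) 0 1 = 0}
    with hH
  -- upper triangular elementary matrices
  have hTdet : ∀ q : R, Matrix.det !![(1:R), q; 0, 1] = 1 := by
    intro q; simp [Matrix.det_fin_two_of]
  have hLdet : ∀ q : R, Matrix.det !![(1:R), 0; q, 1] = 1 := by
    intro q; simp [Matrix.det_fin_two_of]
  set T : R → Matrix.SpecialLinearGroup (Fin 2) R := fun q => ⟨!![1, q; 0, 1], hTdet q⟩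
    with hT
  set L : R → Matrix.SpecialLinearGroup (Fin 2) R := fun q => ⟨!![1, 0; q, 1], hLdet q⟩
    with hL
  have hTmem : ∀ q : R, T q ∈ H := by
    intro q
    exact Subgroup.subset_closure (Or.inl (by simp [hT]))
  have hLmem : ∀ q : R, L q ∈ H := by
    intro q
    exact Subgroup.subset_closure (Or.inr (by simp [hL]))
  have hSdet : Matrix.det !![(0:R), -1; 1, 0] = 1 := by simp [Matrix.det_fin_two_of]
  set S : Matrix.SpecialLinearGroup (Fin 2) R := ⟨!![0, -1; 1, 0], hSdet⟩ with hS
  have hSmem : S ∈ H := by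
    have : S = T (-1) * L 1 * T (-1) := by
      ext i j
      rw [Matrix.SpecialLinearGroup.coe_mul, Matrix.SpecialLinearGroup.coe_mul]
      simp only [hS, hT, hL, Matrix.SpecialLinearGroup.coe_mul]
      rw [Matrix.mul_apply]
      fin_cases i <;> fin_cases j <;>
        simp [Matrix.mul_apply, Fin.sum_univ_two]
    rw [this]
    exact mul_mem (mul_mem (hTmem _) (hLmem _)) (hTmem _)
  -- main induction
  have key : ∀ w : W, ∀ M : Matrix.SpecialLinearGroup (Fin 2) R,
      Φ ((M : Matrix (Fin 2) (Fin 2) R) 1 0) = w → M ∈ H := by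
    intro w
    induction w using hW.induction with
    | _ w ih =>
      intro M hM
      by_cases hc : (M : Matrix (Fin 2) (Fin 2) R) 1 0 = 0
      · exact Subgroup.subset_closure (Or.inl hc)
      · have hdet : (M : Matrix (Fin 2) (Fin 2) R).det = 1 := M.property
        rw [Matrix.det_fin_two] at hdet
        have hcop : ∃ x y : R, (M : Matrix (Fin 2) (Fin 2) R) 0 0 * x +
            (M : Matrix (Fin 2) (Fin 2) R) 1 0 * y = 1 := by
          exact ⟨(M : Matrix (Fin 2) (Fin 2) R) 1 1,
            -(M : Matrix (Fin 2) (Fin 2) R) 0 1, by linear_combination hdet⟩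
        obtain ⟨q, hq⟩ := hΦ _ _ hc hcop
        set N := S * T (-q) * M with hN
        have hN10 : (N : Matrix (Fin 2) (Fin 2) R) 1 0 =
            (M : Matrix (Fin 2) (Fin 2) R) 0 0 -
            (M : Matrix (Fin 2) (Fin 2) R) 1 0 * q := by
          rw [hN, Matrix.SpecialLinearGroup.coe_mul, Matrix.SpecialLinearGroup.coe_mul]
          simp only [hN, hS, hT, Matrix.SpecialLinearGroup.coe_mul]
          simp [Matrix.mul_apply, Fin.sum_univ_two]
          ring
        have hNmem : N ∈ H := by
          apply ih (Φ ((N : Matrix (Fin 2) (Fin 2) R) 1 0)) _ N rfl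
          rw [hN10, ← hM]
          exact hq
        have : M = (S * T (-q))⁻¹ * N := by
          rw [hN]; group
        rw [this]
        exact mul_mem (inv_mem (mul_mem hSmem (hTmem _))) hNmem
  rw [eq_top_iff]
  intro M _
  exact key _ M rfl
end

section
/- The ring ℤ[√−3] (the subring of ℂ consisting of elements a + b√−3 with a, b ∈ ℤ) is semi-Euclidean with the norm as stathm: for all a, b ∈ ℤ[√−3] with b ≠ 0, if there exist x, y ∈ ℤ[√−3] with a·x + b·y = 1, then there exists q ∈ ℤ[√−3] such that N(a − b·q) < N(b), where N(x + y√−3) = x² + 3y² is the norm. -/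
/-- Reduction mod the prime ideal `(2, 1+√−3)` of `ℤ[√−3]`. -/
def phi3 : Zsqrtd (-3) →+* ZMod 2 where
  toFun z := (z.re : ZMod 2) + (z.im : ZMod 2)
  map_one' := by simp
  map_mul' z w := by
    have h : ∀ p q u v : ZMod 2,
        (p * u + (-3) * (q * v)) + (p * v + q * u) = (p + q) * (u + v) := by decide
    simp only [Zsqrtd.re_mul, Zsqrtd.im_mul]
    push_cast
    linear_combination h (z.re : ZMod 2) (z.im : ZMod 2) (w.re : ZMod 2) (w.im : ZMod 2)
  map_zero' := by simp
  map_add' z w := by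
    simp only [Zsqrtd.re_add, Zsqrtd.im_add]
    push_cast
    ring

lemma phi3_apply (z : Zsqrtd (-3)) : phi3 z = (z.re : ZMod 2) + (z.im : ZMod 2) := rfl

lemma phi3_norm (z : Zsqrtd (-3)) : ((z.norm : ℤ) : ZMod 2) = phi3 z := by
  have h : ∀ u v : ZMod 2, u * u - (-3) * (v * v) = u + v := by decide
  rw [Zsqrtd.norm_def, phi3_apply]
  push_cast
  linear_combination h (z.re : ZMod 2) (z.im : ZMod 2)

lemma round_bound (n c : ℤ) (hn : 0 < n) :
    -n ≤ 2 * (c - n * ((2 * c + n) / (2 * n))) ∧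
      2 * (c - n * ((2 * c + n) / (2 * n))) < n := by
  have h2n : (0:ℤ) < 2 * n := by linarith
  have h := Int.mul_ediv_add_emod (2 * c + n) (2 * n)
  have e1 := Int.emod_nonneg (2 * c + n) (ne_of_gt h2n)
  have e2 := Int.emod_lt_of_pos (2 * c + n) h2n
  constructor <;> nlinarith [h, e1, e2]

/-- `ℤ[√−3]` is semi-Euclidean with the norm as stathm: for coprime
`a, b` with `b ≠ 0` there is a quotient `q` with `N(a − bq) < N(b)`. -/
theorem zsqrtd_neg_three_semiEuclidean
    (a b : Zsqrtd (-3)) (hb : b ≠ 0)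
    (hcop : ∃ x y : Zsqrtd (-3), a * x + b * y = 1) :
    ∃ q : Zsqrtd (-3), (a - b * q).norm < b.norm := by
  obtain ⟨x, y, hxy⟩ := hcop
  set n := b.norm with hn
  have hnpos : 0 < n := by
    rcases lt_or_eq_of_le (Zsqrtd.norm_nonneg (by norm_num) b) with h | h
    · exact h
    · exact absurd ((Zsqrtd.norm_eq_zero_iff (by norm_num) b).1 h.symm) hb
  set c := a * star b with hc
  set q1 : ℤ := (2 * c.re + n) / (2 * n) with hq1
  set q2 : ℤ := (2 * c.im + n) / (2 * n) with hq2
  set r1 : ℤ := c.re - n * q1 with hr1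
  set r2 : ℤ := c.im - n * q2 with hr2
  have hb1 : -n ≤ 2 * r1 ∧ 2 * r1 < n := round_bound n c.re hnpos
  have hb2 : -n ≤ 2 * r2 ∧ 2 * r2 < n := round_bound n c.im hnpos
  set q : Zsqrtd (-3) := ⟨q1, q2⟩ with hq
  set s : Zsqrtd (-3) := a - b * q with hs
  have hbs : b * star b = (n : Zsqrtd (-3)) := (Zsqrtd.norm_eq_mul_conj b).symm
  have hkey : s * star b = c - (n : Zsqrtd (-3)) * q := by
    rw [hs, hc, ← hbs]; ring
  have hre : (s * star b).re = r1 := by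
    rw [hkey, hr1]
    simp [Zsqrtd.re_sub, Zsqrtd.re_mul, hq]
  have him : (s * star b).im = r2 := by
    rw [hkey, hr2]
    simp [Zsqrtd.im_sub, Zsqrtd.im_mul, hq]
  have hnormeq : s.norm * n = r1 * r1 + 3 * (r2 * r2) := by
    have h1 : (s * star b).norm = s.norm * n := by
      rw [Zsqrtd.norm_mul, Zsqrtd.norm_conj]
    have h2 : (s * star b).norm = r1 * r1 + 3 * (r2 * r2) := by
      rw [Zsqrtd.norm_def, hre, him]; ring
    rw [← h1, h2]
  by_cases heq : 2 * r1 = -n ∧ 2 * r2 = -n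
  · -- equality case: contradiction with coprimality
    exfalso
    have hsn : s.norm = n := by
      have : s.norm * n = n * n := by
        rw [hnormeq]; nlinarith [heq.1, heq.2]
      exact mul_right_cancel₀ (ne_of_gt hnpos) this
    have hn0 : ((n : ℤ) : ZMod 2) = 0 := by
      refine (ZMod.intCast_zmod_eq_zero_iff_dvd n 2).mpr ?_
      exact ⟨-r1, by have := heq.1; push_cast; omega⟩
    have hb0 : phi3 b = 0 := by rw [← phi3_norm]; exact hn0
    have hs0 : phi3 s = 0 := by rw [← phi3_norm, hsn]; exact hn0
    have ha0 : phi3 a = 0 := by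
      have ha : a = b * q + s := by rw [hs]; ring
      rw [ha, map_add, map_mul, hb0, hs0]; ring
    have : (1 : ZMod 2) = 0 := by
      calc (1 : ZMod 2) = phi3 1 := by simp
        _ = phi3 (a * x + b * y) := by rw [hxy]
        _ = 0 := by rw [map_add, map_mul, map_mul, ha0, hb0]; ring
    exact absurd this (by decide)
  · refine ⟨q, ?_⟩
    obtain ⟨l1, u1⟩ := hb1
    obtain ⟨l2, u2⟩ := hb2
    have hstrict : r1 * r1 + 3 * (r2 * r2) < n * n := by
      by_cases h1 : 2 * r1 = -n
      · have h2 : 2 * r2 ≠ -n := fun h => heq ⟨h1, h⟩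
        have l2' : -n < 2 * r2 := lt_of_le_of_ne l2 (fun h => h2 h.symm)
        have e : (2 * r1) * (2 * r1) = n * n := by rw [h1]; ring
        have p2 : 0 < (n - 2 * r2) * (n + 2 * r2) :=
          mul_pos (by linarith) (by linarith)
        nlinarith [e, p2]
      · have l1' : -n < 2 * r1 := lt_of_le_of_ne l1 (fun h => h1 h.symm)
        have p1 : 0 < (n - 2 * r1) * (n + 2 * r1) :=
          mul_pos (by linarith) (by linarith)
        have p2 : 0 ≤ (n - 2 * r2) * (n + 2 * r2) :=
          mul_nonneg (by linarith) (by linarith)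
        nlinarith [p1, p2]
    have hlt : s.norm * n < n * n := by rw [hnormeq]; exact hstrict
    exact lt_of_mul_lt_mul_right hlt (le_of_lt hnpos)
end

section
/- The group SL(2, ℤ[√−3]) is generated by its upper triangular and lower triangular matrices; that is, the subgroup of SL(2, ℤ[√−3]) generated by the set of matrices that are upper or lower triangular equals the whole group. -/
section Sl2Zsqrtd

local notation "R3" => Zsqrtd (-3)

lemma zs_cancel (x y z : R3) (hz : z ≠ 0) (h : x * z = y * z) : x = y := by
  have h2 : (x - y) * z = 0 := by rw [sub_mul, h, sub_self]
  have h3 := congrArg Zsqrtd.norm h2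
  rw [Zsqrtd.norm_mul, Zsqrtd.norm_zero] at h3
  have hz' : z.norm ≠ 0 := fun h0 => hz ((Zsqrtd.norm_eq_zero_iff (by norm_num) z).mp h0)
  have h4 : (x - y).norm = 0 := by
    rcases mul_eq_zero.mp h3 with h' | h'
    · exact h'
    · exact absurd h' hz'
  have := (Zsqrtd.norm_eq_zero_iff (by norm_num) (x - y)).mp h4
  linear_combination this

lemma norm_pos_of_ne_zero (c : R3) (h : c ≠ 0) : 0 < c.norm := by
  have h1 := Zsqrtd.norm_nonneg (by norm_num) c
  have h2 : ¬ c.norm = 0 := fun h0 => h ((Zsqrtd.norm_eq_zero_iff (by norm_num) c).mp h0)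
  omega

lemma div_lemma (a c : R3) (hc : c ≠ 0) :
    (∃ q : R3, (a - q*c).norm < c.norm) ∨
    (∃ q : R3, 2*(a - q*c) = c * ⟨1, -1⟩) := by
  have hN : 0 < c.norm := norm_pos_of_ne_zero c hc
  set N := c.norm with hNdef
  set m := (a * star c).re with hm
  set n := (a * star c).im with hn
  set q₁ := (2*m + N) / (2*N) with hq₁
  set q₂ := (2*n + N) / (2*N) with hq₂
  have hb₁ : -N ≤ 2*(m - q₁*N) ∧ 2*(m - q₁*N) < N := by
    have e1 : 0 ≤ (2*m + N) % (2*N) := Int.emod_nonneg _ (by omega)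
    have e2 : (2*m + N) % (2*N) < 2*N := Int.emod_lt_of_pos _ (by omega)
    have e3 := Int.mul_ediv_add_emod (2*m + N) (2*N)
    rw [← hq₁] at e3
    have e4 : 2*N*q₁ = 2*(q₁*N) := by ring
    omega
  have hb₂ : -N ≤ 2*(n - q₂*N) ∧ 2*(n - q₂*N) < N := by
    have e1 : 0 ≤ (2*n + N) % (2*N) := Int.emod_nonneg _ (by omega)
    have e2 : (2*n + N) % (2*N) < 2*N := Int.emod_lt_of_pos _ (by omega)
    have e3 := Int.mul_ediv_add_emod (2*n + N) (2*N)
    rw [← hq₂] at e3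
    have e4 : 2*N*q₂ = 2*(q₂*N) := by ring
    omega
  set q : R3 := ⟨q₁, q₂⟩ with hq
  have hstar : star c ≠ 0 := fun h0 => hc (by simpa using congrArg star h0)
  have key : (a - q*c) * star c = ⟨m - q₁*N, n - q₂*N⟩ := by
    have h1 : (c * star c : R3) = (N : R3) := (Zsqrtd.norm_eq_mul_conj c).symm
    have h0 : (a - q*c) * star c = a * star c - q * (c * star c) := by ring
    rw [h0, h1]
    ext <;> simp [Zsqrtd.re_mul, Zsqrtd.im_mul, hm, hn, hq]
  have hnorm : (a - q*c).norm * N = (m - q₁*N)*(m - q₁*N) + 3*((n - q₂*N)*(n - q₂*N)) := by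
    have h2 := congrArg Zsqrtd.norm key
    rw [Zsqrtd.norm_mul, Zsqrtd.norm_conj] at h2
    rw [← hNdef] at h2
    rw [h2]
    simp [Zsqrtd.norm_def]
    ring
  by_cases hex : 2*(m - q₁*N) = -N ∧ 2*(n - q₂*N) = -N
  · right
    refine ⟨q - 1, ?_⟩
    apply zs_cancel _ _ (star c) hstar
    have h1 : (c * star c : R3) = (N : R3) := (Zsqrtd.norm_eq_mul_conj c).symm
    have expand : (2*(a - (q-1)*c)) * star c = 2*((a - q*c) * star c) + 2*(c * star c) := by ring
    rw [expand, key, h1]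
    have expand2 : (c * ⟨1,-1⟩) * star c = (⟨1,-1⟩ : R3) * (N : R3) := by
      rw [mul_comm c, mul_assoc, h1]
    rw [expand2]
    ext <;> simp [Zsqrtd.re_mul, Zsqrtd.im_mul] <;> omega
  · left
    refine ⟨q, ?_⟩
    have hlt : (m - q₁*N)*(m - q₁*N) + 3*((n - q₂*N)*(n - q₂*N)) < N * N := by
      set r₁ := m - q₁*N
      set r₂ := n - q₂*N
      rcases not_and_or.mp hex with h' | h'
      · have hb : -N < 2*r₁ := lt_of_le_of_ne hb₁.1 (Ne.symm h')
        nlinarith [mul_nonneg (by omega : (0:ℤ) ≤ N - 1 - 2*r₁) (by omega : (0:ℤ) ≤ N - 1 + 2*r₁),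
          mul_nonneg (by omega : (0:ℤ) ≤ N - 2*r₂) (by omega : (0:ℤ) ≤ N + 2*r₂), hN]
      · have hb : -N < 2*r₂ := lt_of_le_of_ne hb₂.1 (Ne.symm h')
        nlinarith [mul_nonneg (by omega : (0:ℤ) ≤ N - 1 - 2*r₂) (by omega : (0:ℤ) ≤ N - 1 + 2*r₂),
          mul_nonneg (by omega : (0:ℤ) ≤ N - 2*r₁) (by omega : (0:ℤ) ≤ N + 2*r₁), hN]
    have h5 := hnorm ▸ hlt
    exact lt_of_mul_lt_mul_right h5 (le_of_lt hN)

lemma int_aux (c₁ c₂ w₁ w₂ : ℤ)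
    (h : (c₁*c₁ + 3*(c₂*c₂)) * (w₁*w₁ + 3*(w₂*w₂)) = 4)
    (hp : (w₁ + w₂) % 2 = 0) : c₁*c₁ + 3*(c₂*c₂) = 1 := by
  have hB1 : 1 ≤ w₁*w₁ + 3*(w₂*w₂) := by
    rcases (lt_or_ge (w₁*w₁ + 3*(w₂*w₂)) 1) with h' | h'
    · exfalso
      have : w₁*w₁ + 3*(w₂*w₂) = 0 := by nlinarith [mul_self_nonneg w₁, mul_self_nonneg w₂]
      rw [this, mul_zero] at h; omega
    · exact h'
  have hA1 : 1 ≤ c₁*c₁ + 3*(c₂*c₂) := by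
    rcases (lt_or_ge (c₁*c₁ + 3*(c₂*c₂)) 1) with h' | h'
    · exfalso
      have : c₁*c₁ + 3*(c₂*c₂) = 0 := by nlinarith [mul_self_nonneg c₁, mul_self_nonneg c₂]
      rw [this, zero_mul] at h; omega
    · exact h'
  have hA4 : c₁*c₁ + 3*(c₂*c₂) ≤ 4 := by nlinarith
  have hB4 : w₁*w₁ + 3*(w₂*w₂) ≤ 4 := by nlinarith
  have hc₁ : -2 ≤ c₁ ∧ c₁ ≤ 2 := by constructor <;> nlinarith [mul_self_nonneg c₂]
  have hc₂ : -1 ≤ c₂ ∧ c₂ ≤ 1 := by constructor <;> nlinarith [mul_self_nonneg c₁]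
  have hw₁ : -2 ≤ w₁ ∧ w₁ ≤ 2 := by constructor <;> nlinarith [mul_self_nonneg w₂]
  have hw₂ : -1 ≤ w₂ ∧ w₂ ≤ 1 := by constructor <;> nlinarith [mul_self_nonneg w₁]
  obtain ⟨a1,a2⟩ := hc₁; obtain ⟨b1,b2⟩ := hc₂; obtain ⟨d1,d2⟩ := hw₁; obtain ⟨e1,e2⟩ := hw₂
  interval_cases c₁ <;> interval_cases c₂ <;> interval_cases w₁ <;> interval_cases w₂ <;> omega

lemma exc_lemma (c r q u v : R3) (h2 : 2*r = c * ⟨1,-1⟩)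
    (huni : u*(r + q*c) + v*c = 1) : c.norm = 1 := by
  have hkey : c * (u * ⟨1,-1⟩ + 2*(u*q+v)) = 2 := by
    linear_combination (-u) * h2 + 2*huni
  set w : R3 := u * ⟨1,-1⟩ + 2*(u*q+v) with hw
  have hnorm : c.norm * w.norm = 4 := by
    have h3 := congrArg Zsqrtd.norm hkey
    rw [Zsqrtd.norm_mul] at h3
    have h4 : ((2 : R3)).norm = 4 := by
      have h5 : ((2 : R3)) = ((2:ℤ) : R3) := by norm_num
      rw [h5, Zsqrtd.norm_intCast]; norm_num
    rw [h4] at h3; exact h3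
  have hpar : (w.re + w.im) % 2 = 0 := by
    rw [hw]
    simp [Zsqrtd.re_mul, Zsqrtd.im_mul]
    omega
  have h4 : c.norm = c.re*c.re + 3*(c.im*c.im) := by rw [Zsqrtd.norm_def]; ring
  have h5 : w.norm = w.re*w.re + 3*(w.im*w.im) := by rw [Zsqrtd.norm_def]; ring
  rw [h4, h5] at hnorm
  rw [h4]
  exact int_aux _ _ _ _ hnorm hpar

lemma unit_sq (c : R3) (h : c.norm = 1) : c * c = 1 := by
  rw [Zsqrtd.norm_def] at h
  have h1 : c.im * c.im = 0 := by nlinarith [mul_self_nonneg c.re, mul_self_nonneg c.im]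
  have him : c.im = 0 := by nlinarith [mul_self_nonneg c.im]
  ext <;> simp [Zsqrtd.re_mul, Zsqrtd.im_mul, him] <;> nlinarith [him]

def S3 : Set (Matrix.SpecialLinearGroup (Fin 2) (Zsqrtd (-3))) :=
  {M | (M : Matrix (Fin 2) (Fin 2) (Zsqrtd (-3))) 1 0 = 0 ∨
       (M : Matrix (Fin 2) (Fin 2) (Zsqrtd (-3))) 0 1 = 0}

def Eu (x : R3) : Matrix.SpecialLinearGroup (Fin 2) (Zsqrtd (-3)) :=
  ⟨!![1, x; 0, 1], by simp [Matrix.det_fin_two_of]⟩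

def El (x : R3) : Matrix.SpecialLinearGroup (Fin 2) (Zsqrtd (-3)) :=
  ⟨!![1, 0; x, 1], by simp [Matrix.det_fin_two_of]⟩

lemma Eu_coe (x : R3) :
    ((Eu x : Matrix.SpecialLinearGroup (Fin 2) (Zsqrtd (-3))) : Matrix (Fin 2) (Fin 2) R3) =
      !![1, x; 0, 1] := rfl

lemma El_coe (x : R3) :
    ((El x : Matrix.SpecialLinearGroup (Fin 2) (Zsqrtd (-3))) : Matrix (Fin 2) (Fin 2) R3) =
      !![1, 0; x, 1] := rfl

lemma hEu (x : R3) : Eu x ∈ Subgroup.closure S3 :=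
  Subgroup.subset_closure (Or.inl (by simp [Eu]))

lemma hEl (x : R3) : El x ∈ Subgroup.closure S3 :=
  Subgroup.subset_closure (Or.inr (by simp [El]))

lemma main_induction : ∀ (n : ℕ) (M : Matrix.SpecialLinearGroup (Fin 2) (Zsqrtd (-3))),
    ((M : Matrix (Fin 2) (Fin 2) (Zsqrtd (-3))) 1 0).norm.toNat ≤ n →
    M ∈ Subgroup.closure S3 := by
  intro n
  induction n with
  | zero =>
    intro M hM
    apply Subgroup.subset_closure
    left
    set c := (M : Matrix (Fin 2) (Fin 2) (Zsqrtd (-3))) 1 0 with hc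
    by_contra hc0
    have := norm_pos_of_ne_zero c hc0
    omega
  | succ n ih =>
    intro M hM
    set a := (M : Matrix (Fin 2) (Fin 2) (Zsqrtd (-3))) 0 0 with ha
    set b := (M : Matrix (Fin 2) (Fin 2) (Zsqrtd (-3))) 0 1 with hb
    set c := (M : Matrix (Fin 2) (Fin 2) (Zsqrtd (-3))) 1 0 with hc
    set d := (M : Matrix (Fin 2) (Fin 2) (Zsqrtd (-3))) 1 1 with hd
    by_cases hc0 : c = 0
    · exact Subgroup.subset_closure (Or.inl hc0)
    have hdet : a * d - b * c = 1 := by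
      have h := M.prop
      rw [Matrix.det_fin_two] at h
      linear_combination h
    by_cases h1 : c.norm = 1
    · -- c is a unit
      have hcc : c * c = 1 := unit_sq c h1
      set M₂ := El (-c) * (Eu ((1-a)*c) * M) with hM₂
      have hM₂mem : M₂ ∈ Subgroup.closure S3 := by
        apply Subgroup.subset_closure
        left
        rw [hM₂]
        simp only [El_coe, Eu_coe, Matrix.SpecialLinearGroup.coe_mul, Matrix.SpecialLinearGroup.coe_mk,
          Matrix.mul_apply, Fin.sum_univ_two]
        simp
        linear_combination (c * a - c) * hcc
      have hMeq : M = (Eu ((1-a)*c))⁻¹ * ((El (-c))⁻¹ * M₂) := by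
        rw [hM₂]; group
      rw [hMeq]
      exact Subgroup.mul_mem _ (Subgroup.inv_mem _ (hEu _))
        (Subgroup.mul_mem _ (Subgroup.inv_mem _ (hEl _)) hM₂mem)
    · rcases div_lemma a c hc0 with ⟨q, hq⟩ | ⟨q, hq⟩
      · -- strict reduction
        set W := Eu 1 * (El (-1) * Eu 1) with hW
        have hWmem : W ∈ Subgroup.closure S3 :=
          Subgroup.mul_mem _ (hEu 1) (Subgroup.mul_mem _ (hEl (-1)) (hEu 1))
        set M' := W * (Eu (-q) * M) with hM'
        have hentry : (M' : Matrix (Fin 2) (Fin 2) (Zsqrtd (-3))) 1 0 = -(a - q*c) := by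
          rw [hM']
          simp only [hW, El_coe, Eu_coe, Matrix.SpecialLinearGroup.coe_mul,
            Matrix.SpecialLinearGroup.coe_mk, Matrix.mul_apply, Fin.sum_univ_two]
          simp
          ring
        have hless : ((M' : Matrix (Fin 2) (Fin 2) (Zsqrtd (-3))) 1 0).norm.toNat ≤ n := by
          rw [hentry, Zsqrtd.norm_neg]
          have h2 := norm_pos_of_ne_zero c hc0
          have h3 := Zsqrtd.norm_nonneg (by norm_num : (-3:ℤ) ≤ 0) (a - q*c)
          omega
        have hM'mem := ih M' hless
        have hMeq : M = (Eu (-q))⁻¹ * (W⁻¹ * M') := by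
          rw [hM']; group
        rw [hMeq]
        exact Subgroup.mul_mem _ (Subgroup.inv_mem _ (hEu _))
          (Subgroup.mul_mem _ (Subgroup.inv_mem _ hWmem) hM'mem)
      · -- exceptional case: contradiction
        exfalso
        apply h1
        apply exc_lemma c (a - q*c) q d (-b) hq
        linear_combination hdet

end Sl2Zsqrtd

/-- `SL(2, ℤ[√−3])` is generated by its upper and lower triangular
matrices. -/
theorem sl2_zsqrtd_neg_three_generated_by_triangular :
    Subgroup.closure
      {M : Matrix.SpecialLinearGroup (Fin 2) (Zsqrtd (-3)) |
        (M : Matrix (Fin 2) (Fin 2) (Zsqrtd (-3))) 1 0 = 0 ∨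
        (M : Matrix (Fin 2) (Fin 2) (Zsqrtd (-3))) 0 1 = 0}
      = ⊤ := by
  rw [eq_top_iff]
  intro M _
  exact main_induction _ M le_rfl
end

section
/- For every integer d ≥ 4, the subgroup of SL(2, ℤ[√−d]) generated by the upper triangular and lower triangular matrices has infinite index in SL(2, ℤ[√−d]). -/
namespace ElemInf

variable (d : ℤ)

abbrev Zd (d : ℤ) := Zsqrtd (-d)
abbrev M2 (d : ℤ) := Matrix (Fin 2) (Fin 2) (Zd d)

def Tm (a : Zd d) : M2 d := !![1, a; 0, 1]
def Sm : M2 d := !![0, -1; 1, 0]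
def P (l : List (Zd d)) : M2 d := (l.map fun a => Sm d * Tm d a).prod

variable {d}

def Big (a : Zd d) : Prop := a ≠ 0 ∧ a ≠ 1 ∧ a ≠ -1

def IsNF (A : M2 d) : Prop :=
  (∃ a0, A = Tm d a0 ∨ A = -Tm d a0) ∨
  (∃ a0 l b, (∀ x ∈ l, Big x) ∧
    (A = Tm d a0 * (P d l * (Sm d * Tm d b)) ∨
     A = -(Tm d a0 * (P d l * (Sm d * Tm d b)))))

lemma Tm_mul_Tm (a b : Zd d) : Tm d a * Tm d b = Tm d (a + b) := by
  simp [Tm, Matrix.mul_fin_two]; ring_nf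

lemma Tm_zero : Tm d 0 = 1 := by simp [Tm, Matrix.one_fin_two]

lemma Sm_mul_Sm : Sm d * Sm d = -1 := by
  simp only [Sm, Matrix.mul_fin_two]
  ext i j <;> fin_cases i <;> fin_cases j <;> simp [Matrix.one_fin_two] <;> ring

lemma P_nil : P d [] = 1 := by simp [P]

lemma P_append_singleton (l : List (Zd d)) (a : Zd d) :
    P d (l ++ [a]) = P d l * (Sm d * Tm d a) := by
  simp [P]

lemma P_cons (a : Zd d) (l : List (Zd d)) :
    P d (a :: l) = (Sm d * Tm d a) * P d l := by
  simp [P]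

-- local identities (right-associated)
lemma id_blk0 (c : Zd d) : Sm d * (Tm d 0 * (Sm d * Tm d c)) = -(Tm d c) := by
  rw [Tm_zero, one_mul, ← mul_assoc, Sm_mul_Sm, neg_one_mul]

lemma id_blk1 (c : Zd d) :
    Sm d * (Tm d 1 * (Sm d * Tm d c)) = Tm d (-1) * (Sm d * Tm d (c - 1)) := by
  simp only [Sm, Tm, Matrix.mul_fin_two]
  ext i j <;> fin_cases i <;> fin_cases j <;> simp <;> ring

lemma id_blkm1 (c : Zd d) :
    Sm d * (Tm d (-1) * (Sm d * Tm d c)) = -(Tm d 1 * (Sm d * Tm d (c + 1))) := by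
  simp only [Sm, Tm, Matrix.mul_fin_two]
  ext i j <;> fin_cases i <;> fin_cases j <;> simp <;> ring

lemma Tm_mul_Tm' (a b : Zd d) (X : M2 d) : Tm d a * (Tm d b * X) = Tm d (a + b) * X := by
  rw [← mul_assoc, Tm_mul_Tm]

lemma isNF_neg {A : M2 d} (h : IsNF A) : IsNF (-A) := by
  rcases h with ⟨a0, h | h⟩ | ⟨a0, l, b, hl, h | h⟩
  · exact Or.inl ⟨a0, Or.inr (by rw [h])⟩
  · exact Or.inl ⟨a0, Or.inl (by rw [h, neg_neg])⟩
  · exact Or.inr ⟨a0, l, b, hl, Or.inr (by rw [h])⟩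
  · exact Or.inr ⟨a0, l, b, hl, Or.inl (by rw [h, neg_neg])⟩

lemma isNF_mul_Tm {A : M2 d} (h : IsNF A) (c : Zd d) : IsNF (A * Tm d c) := by
  rcases h with ⟨a0, h | h⟩ | ⟨a0, l, b, hl, h | h⟩
  · exact Or.inl ⟨a0 + c, Or.inl (by rw [h, Tm_mul_Tm])⟩
  · exact Or.inl ⟨a0 + c, Or.inr (by rw [h, neg_mul, Tm_mul_Tm])⟩
  · exact Or.inr ⟨a0, l, b + c, hl, Or.inl (by rw [h]; simp only [mul_assoc, Tm_mul_Tm])⟩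
  · exact Or.inr ⟨a0, l, b + c, hl, Or.inr (by rw [h]; simp only [neg_mul, mul_assoc, Tm_mul_Tm])⟩

lemma aux_append (l : List (Zd d)) : ∀ (a0 b c : Zd d), (∀ x ∈ l, Big x) →
    IsNF (Tm d a0 * (P d l * (Sm d * Tm d b)) * (Sm d * Tm d c)) := by
  induction l using List.reverseRecOn with
  | nil =>
    intro a0 b c _
    by_cases hb0 : b = 0
    · refine Or.inl ⟨a0 + c, Or.inr ?_⟩
      subst hb0
      simp only [P_nil, one_mul, mul_assoc, id_blk0, mul_neg, ← Tm_mul_Tm' a0 c 1, mul_one,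
        Tm_mul_Tm]
    by_cases hb1 : b = 1
    · refine Or.inr ⟨a0 + -1, [], c - 1, by simp, Or.inl ?_⟩
      subst hb1
      simp only [P_nil, one_mul, mul_assoc, id_blk1, Tm_mul_Tm']
    by_cases hbm1 : b = -1
    · refine Or.inr ⟨a0 + 1, [], c + 1, by simp, Or.inr ?_⟩
      subst hbm1
      simp only [P_nil, one_mul, mul_assoc, id_blkm1, mul_neg, Tm_mul_Tm']
    · refine Or.inr ⟨a0, [b], c, by simp [Big, hb0, hb1, hbm1], Or.inl ?_⟩
      simp only [P_nil, one_mul, mul_assoc, P_cons, P, List.map_nil, List.prod_nil, mul_one,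
        List.map_cons, List.prod_cons]
  | append_singleton l' a ih =>
    intro a0 b c hl
    have hl' : ∀ x ∈ l', Big x := fun x hx => hl x (by simp [hx])
    have ha : Big a := hl a (by simp)
    by_cases hb0 : b = 0
    · refine Or.inr ⟨a0, l', a + c, hl', Or.inr ?_⟩
      subst hb0
      simp only [P_append_singleton, mul_assoc, id_blk0, mul_neg, Tm_mul_Tm', ← Tm_mul_Tm]
    by_cases hb1 : b = 1
    · subst hb1
      have := ih a0 (a - 1) (c - 1) hl'
      have e : Tm d a0 * (P d (l' ++ [a]) * (Sm d * Tm d 1)) * (Sm d * Tm d c)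
          = Tm d a0 * (P d l' * (Sm d * Tm d (a - 1))) * (Sm d * Tm d (c - 1)) := by
        simp only [P_append_singleton, mul_assoc, id_blk1, Tm_mul_Tm']
        rw [show a + -1 = a - 1 by ring]
      rw [e]; exact this
    by_cases hbm1 : b = -1
    · subst hbm1
      have := isNF_neg (ih a0 (a + 1) (c + 1) hl')
      have e : Tm d a0 * (P d (l' ++ [a]) * (Sm d * Tm d (-1))) * (Sm d * Tm d c)
          = -(Tm d a0 * (P d l' * (Sm d * Tm d (a + 1))) * (Sm d * Tm d (c + 1))) := by
        simp only [P_append_singleton, mul_assoc, id_blkm1, mul_neg, Tm_mul_Tm']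
      rw [e]; exact this
    · refine Or.inr ⟨a0, (l' ++ [a]) ++ [b], c, ?_, Or.inl ?_⟩
      · intro x hx
        rcases List.mem_append.1 hx with hx | hx
        · exact hl x hx
        · simp at hx; subst hx; exact ⟨hb0, hb1, hbm1⟩
      · simp only [P_append_singleton, mul_assoc]

-- units of Zsqrtd (-d) for d ≥ 4 are ±1
lemma unit_pm (hd : 4 ≤ d) {α β : Zd d} (h : α * β = 1) :
    (α = 1 ∧ β = 1) ∨ (α = -1 ∧ β = -1) := by
  have hn : Zsqrtd.norm α * Zsqrtd.norm β = 1 := by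
    rw [← Zsqrtd.norm_mul, h, Zsqrtd.norm_one]
  have hα : Zsqrtd.norm α = α.re * α.re + d * (α.im * α.im) := by simp [Zsqrtd.norm]; ring
  have hβ : Zsqrtd.norm β = β.re * β.re + d * (β.im * β.im) := by simp [Zsqrtd.norm]; ring
  have hα1 : α.re * α.re + d * (α.im * α.im) = 1 := by
    rcases Int.eq_one_or_neg_one_of_mul_eq_one hn with h' | h'
    · rw [← hα, h']
    · exfalso
      rw [hα] at h'
      nlinarith [mul_self_nonneg α.re, mul_self_nonneg α.im]
  have him : α.im = 0 := by
    by_contra him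
    have h3 : 0 < α.im * α.im := mul_self_pos.2 him
    have h4 : 1 ≤ α.im * α.im := by linarith [Int.lt_iff_add_one_le.mp h3]
    nlinarith [mul_self_nonneg α.re]
  have hre2 : α.re * α.re = 1 := by rw [him] at hα1; linarith
  have hre : α.re = 1 ∨ α.re = -1 := by
    rcases mul_eq_zero.1 (show (α.re - 1) * (α.re + 1) = 0 by linear_combination hre2) with h' | h'
    · left; linarith
    · right; linarith
  rcases hre with h' | h'
  · left
    have ha : α = 1 := by
      ext
      · simpa using h'
      · simpa using him
    exact ⟨ha, by rw [ha, one_mul] at h; exact h⟩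
  · right
    have ha : α = -1 := by
      ext
      · simpa using h'
      · simpa using him
    refine ⟨ha, ?_⟩
    rw [ha] at h
    linear_combination -h
variable {d : ℤ}

lemma isNF_mul_block {A : M2 d} (h : IsNF A) (c : Zd d) : IsNF (A * (Sm d * Tm d c)) := by
  rcases h with ⟨a0, h | h⟩ | ⟨a0, l, b, hl, h | h⟩
  · refine Or.inr ⟨a0, [], c, by simp, Or.inl ?_⟩
    rw [h, P_nil, one_mul]
  · refine Or.inr ⟨a0, [], c, by simp, Or.inr ?_⟩
    rw [h, P_nil, one_mul, neg_mul]
  · rw [h]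
    exact aux_append l a0 b c hl
  · rw [h, neg_mul]
    exact isNF_neg (aux_append l a0 b c hl)

lemma negTm_eq (β : Zd d) : (!![-1, β; 0, -1] : M2 d) = -Tm d (-β) := by
  unfold Tm
  ext i j <;> fin_cases i <;> fin_cases j <;> simp

lemma Lm_eq (γ : Zd d) : (!![1, 0; γ, 1] : M2 d) = -((Sm d * Tm d (-γ)) * (Sm d * Tm d 0)) := by
  rw [Tm_zero, mul_one]
  unfold Sm Tm
  simp only [Matrix.mul_fin_two]
  ext i j <;> fin_cases i <;> fin_cases j <;> simp

lemma negLm_eq (γ : Zd d) : (!![-1, 0; γ, -1] : M2 d) = -(!![1, 0; -γ, 1] : M2 d) := by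
  ext i j <;> fin_cases i <;> fin_cases j <;> simp

lemma isNF_mul_Lm {A : M2 d} (h : IsNF A) (γ : Zd d) : IsNF (A * !![1, 0; γ, 1]) := by
  rw [Lm_eq γ, mul_neg, ← mul_assoc]
  exact isNF_neg (isNF_mul_block (isNF_mul_block h _) _)

abbrev SL (d : ℤ) := Matrix.SpecialLinearGroup (Fin 2) (Zd d)

def Sset (d : ℤ) : Set (SL d) :=
  {M | (M : M2 d) 1 0 = 0 ∨ (M : M2 d) 0 1 = 0}

lemma step (hd : 4 ≤ d) {A : M2 d} (hA : IsNF A) (y : SL d)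
    (hy : (y : M2 d) 1 0 = 0 ∨ (y : M2 d) 0 1 = 0) : IsNF (A * (y : M2 d)) := by
  have hdet : Matrix.det (y : M2 d) = 1 := y.prop
  rw [Matrix.det_fin_two] at hdet
  rcases hy with h0 | h0
  · have hαβ : (y : M2 d) 0 0 * (y : M2 d) 1 1 = 1 := by
      rw [h0] at hdet; linear_combination hdet
    rcases unit_pm hd hαβ with ⟨h1, h2⟩ | ⟨h1, h2⟩
    · have hy' := Matrix.eta_fin_two (y : M2 d)
      rw [h0, h1, h2] at hy'
      rw [show (!![1, (y : M2 d) 0 1; 0, 1] : M2 d) = Tm d ((y : M2 d) 0 1) from rfl] at hy'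
      rw [hy']; exact isNF_mul_Tm hA _
    · have hy' := Matrix.eta_fin_two (y : M2 d)
      rw [h0, h1, h2, negTm_eq] at hy'
      rw [hy', mul_neg]
      exact isNF_neg (isNF_mul_Tm hA _)
  · have hαβ : (y : M2 d) 0 0 * (y : M2 d) 1 1 = 1 := by
      rw [h0] at hdet; linear_combination hdet
    rcases unit_pm hd hαβ with ⟨h1, h2⟩ | ⟨h1, h2⟩
    · have hy' := Matrix.eta_fin_two (y : M2 d)
      rw [h0, h1, h2] at hy'
      rw [hy']; exact isNF_mul_Lm hA _
    · have hy' := Matrix.eta_fin_two (y : M2 d)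
      rw [h0, h1, h2, negLm_eq] at hy'
      rw [hy', mul_neg]
      exact isNF_neg (isNF_mul_Lm hA _)

lemma isNF_of_mem_closure (hd : 4 ≤ d) {g : SL d}
    (hg : g ∈ Subgroup.closure (Sset d)) : IsNF (g : M2 d) := by
  induction hg using Subgroup.closure_induction_right with
  | one =>
    refine Or.inl ⟨0, Or.inl ?_⟩
    rw [Tm_zero]
    rfl
  | mul_right x hx y hy ih =>
    rw [Matrix.SpecialLinearGroup.coe_mul]
    exact step hd ih y hy
  | mul_inv_cancel x hx y hy ih =>
    rw [Matrix.SpecialLinearGroup.coe_mul]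
    refine step hd ih y⁻¹ ?_
    rw [Matrix.SpecialLinearGroup.SL2_inv_expl y]
    rcases hy with h | h
    · left; simpa using h
    · right; simpa using h

-- row action
def rowM (p : Zd d × Zd d) (A : M2 d) : Zd d × Zd d :=
  (p.1 * A 0 0 + p.2 * A 1 0, p.1 * A 0 1 + p.2 * A 1 1)

lemma rowM_mul (p : Zd d × Zd d) (A B : M2 d) :
    rowM p (A * B) = rowM (rowM p A) B := by
  simp only [rowM, Matrix.mul_apply, Fin.sum_univ_two, Prod.mk.injEq]
  constructor <;> ring

lemma rowM_Tm (p : Zd d × Zd d) (a : Zd d) :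
    rowM p (Tm d a) = (p.1, p.1 * a + p.2) := by
  simp [rowM, Tm]

lemma rowM_Sm (p : Zd d × Zd d) :
    rowM p (Sm d) = (p.2, -p.1) := by
  simp [rowM, Sm]

lemma rowM_neg (p : Zd d × Zd d) (A : M2 d) :
    rowM p (-A) = (-(rowM p A).1, -(rowM p A).2) := by
  simp only [rowM, Matrix.neg_apply, Prod.mk.injEq]
  constructor <;> ring

-- complex embedding
noncomputable def f (hd : 4 ≤ d) : Zd d →+* ℂ :=
  Zsqrtd.lift ⟨Real.sqrt d * Complex.I, by
    have h0 : (0:ℝ) ≤ (d:ℝ) := by exact_mod_cast le_trans (by norm_num) hd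
    have : (Real.sqrt d : ℂ) * Real.sqrt d = (d : ℂ) := by
      rw [← Complex.ofReal_mul, Real.mul_self_sqrt h0]
      norm_cast
    push_cast
    ring_nf
    rw [Complex.I_sq]
    ring_nf
    rw [show ((Real.sqrt d : ℂ))^2 = (Real.sqrt d : ℂ) * Real.sqrt d by ring, this]⟩

noncomputable def FA (hd : 4 ≤ d) (z : Zd d) : ℝ := ‖f hd z‖

variable (hd : 4 ≤ d)

lemma FA_sq (z : Zd d) : (FA hd z) ^ 2 = ((Zsqrtd.norm z : ℤ) : ℝ) := by
  have hfz : f hd z = (z.re : ℝ) + (z.im * Real.sqrt d : ℝ) * Complex.I := by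
    simp [f, Zsqrtd.lift]
    push_cast
    ring
  have h0 : (0:ℝ) ≤ (d:ℝ) := by exact_mod_cast le_trans (by norm_num) hd
  rw [FA, Complex.sq_norm, hfz, Complex.normSq_add_mul_I]
  have : Real.sqrt d * Real.sqrt d = (d:ℝ) := Real.mul_self_sqrt h0
  rw [Zsqrtd.norm]
  push_cast
  ring_nf
  linear_combination ((z.im : ℝ))^2 * this

lemma FA_nonneg (z : Zd d) : 0 ≤ FA hd z := norm_nonneg _

lemma FA_le_FA_iff (x y : Zd d) : FA hd x ≤ FA hd y ↔ Zsqrtd.norm x ≤ Zsqrtd.norm y := by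
  constructor
  · intro h
    have := pow_le_pow_left₀ (FA_nonneg hd x) h 2
    rw [FA_sq, FA_sq] at this
    exact_mod_cast this
  · intro h
    have h' : (FA hd x)^2 ≤ (FA hd y)^2 := by
      rw [FA_sq, FA_sq]; exact_mod_cast h
    nlinarith [FA_nonneg hd x, FA_nonneg hd y]

lemma FA_mul (x y : Zd d) : FA hd (x * y) = FA hd x * FA hd y := by
  simp [FA, map_mul]

lemma FA_neg (x : Zd d) : FA hd (-x) = FA hd x := by
  simp [FA, map_neg]

lemma FA_big {a : Zd d} (ha : Big a) : 2 ≤ FA hd a := by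
  have h4 : (4:ℤ) ≤ Zsqrtd.norm a := by
    have hn : Zsqrtd.norm a = a.re * a.re + d * (a.im * a.im) := by simp [Zsqrtd.norm]; ring
    rcases ha with ⟨h0, h1, hm1⟩
    by_cases him : a.im = 0
    · have hre : a.re ≠ 0 := by
        intro h; apply h0; ext <;> simp [h, him]
      have hre1 : a.re ≠ 1 := by
        intro h; apply h1; ext <;> simp [h, him]
      have hrem1 : a.re ≠ -1 := by
        intro h; apply hm1; ext <;> simp [h, him]
      have h2 : 2 ≤ a.re ∨ a.re ≤ -2 := by omega
      rw [hn, him]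
      rcases h2 with h2 | h2 <;> nlinarith
    · have h3 : 0 < a.im * a.im := mul_self_pos.2 him
      have h4 : 1 ≤ a.im * a.im := by linarith [Int.lt_iff_add_one_le.mp h3]
      rw [hn]
      nlinarith [mul_self_nonneg a.re]
  have : (2:ℝ)^2 ≤ (FA hd a)^2 := by
    rw [FA_sq]
    norm_num
    exact_mod_cast h4
  nlinarith [FA_nonneg hd a]

-- growth along blocks
lemma grow (B : ℝ) (l : List (Zd d)) (hl : ∀ x ∈ l, Big x) :
    ∀ p : Zd d × Zd d, B ≤ FA hd p.1 → FA hd p.1 ≤ FA hd p.2 →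
      B ≤ FA hd (rowM p (P d l)).1 ∧ FA hd (rowM p (P d l)).1 ≤ FA hd (rowM p (P d l)).2 := by
  induction l with
  | nil =>
    intro p h1 h2
    simpa [P_nil, rowM, Matrix.one_apply] using ⟨h1, h2⟩
  | cons a l ih =>
    intro p h1 h2
    have ha : Big a := hl a (by simp)
    have hl' : ∀ x ∈ l, Big x := fun x hx => hl x (by simp [hx])
    rw [P_cons, rowM_mul]
    have hstep : rowM p (Sm d * Tm d a) = (p.2, p.2 * a + -p.1) := by
      rw [rowM_mul, rowM_Sm, rowM_Tm]
    rw [hstep]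
    apply ih hl' (p.2, p.2 * a + -p.1)
    · exact le_trans h1 h2
    · -- FA p.2 ≤ FA (p.2 * a - p.1)
      have habs : FA hd (p.2 * a) - FA hd p.1 ≤ FA hd (p.2 * a + -p.1) := by
        have h := norm_sub_norm_le (f hd (p.2 * a)) (f hd p.1)
        have e : f hd (p.2 * a) - f hd p.1 = f hd (p.2 * a + -p.1) := by
          rw [map_add, map_neg]; ring
        rw [e] at h
        simpa [FA] using h
      have h2a : 2 * FA hd p.2 ≤ FA hd (p.2 * a) := by
        rw [FA_mul]
        nlinarith [FA_big hd ha, FA_nonneg hd p.2]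
      simp only []
      linarith

lemma key {g : SL d} (hg : g ∈ Subgroup.closure (Sset d)) (p : Zd d × Zd d)
    (hstuck : ∀ r : Zd d, FA hd p.1 ≤ FA hd (p.1 * r + p.2)) :
    FA hd p.1 ≤ FA hd (rowM p (g : M2 d)).1 := by
  have hnf := isNF_of_mem_closure hd hg
  rcases hnf with ⟨a0, h | h⟩ | ⟨a0, l, b, hl, h | h⟩
  · rw [h, rowM_Tm]
  · rw [h, rowM_neg, rowM_Tm]
    simp [FA_neg]
  · rw [h, rowM_mul, rowM_mul, rowM_Tm, rowM_mul, rowM_Sm, rowM_Tm]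
    have hg0 := grow hd (FA hd p.1) l hl (p.1, p.1 * a0 + p.2) (le_refl _) (hstuck a0)
    exact le_trans (le_trans hg0.1 hg0.2) (le_of_eq rfl)
  · rw [h, rowM_neg, rowM_mul, rowM_mul, rowM_Tm, rowM_mul, rowM_Sm, rowM_Tm]
    simp only [FA_neg]
    have hg0 := grow hd (FA hd p.1) l hl (p.1, p.1 * a0 + p.2) (le_refl _) (hstuck a0)
    exact le_trans (le_trans hg0.1 hg0.2) (le_of_eq rfl)

-- the family of matrices
noncomputable section

def ω (d : ℤ) : Zd d := Zsqrtd.sqrtd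

def cE (d k : ℤ) : Zd d := ((4*k : ℤ) : Zd d)
def dE (d k : ℤ) : Zd d := ((2*k+1 : ℤ) : Zd d) + ((2*k : ℤ) : Zd d) * ω d

def gmat (d k : ℤ) : M2 d :=
  !![((1 - 2*k : ℤ) : Zd d) - ((2*k : ℤ) : Zd d) * ω d,
     ((k*(d-1) : ℤ) : Zd d) - ((2*k : ℤ) : Zd d) * ω d;
     cE d k, dE d k]

lemma gmat_det (k : ℤ) : (gmat d k).det = 1 := by
  rw [gmat, Matrix.det_fin_two_of]
  have hd2 : (ω d) * (ω d) = -((d : ℤ) : Zd d) := by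
    rw [ω, Zsqrtd.dmuld]; push_cast; ring
  unfold cE dE
  push_cast
  linear_combination (-4*(k:Zd d)^2) * hd2

def gk (d k : ℤ) : SL d := ⟨gmat d k, gmat_det k⟩

end

lemma norm_c (k : ℤ) : Zsqrtd.norm (cE d k) = 16*k^2 := by
  simp [cE, Zsqrtd.norm, Zsqrtd.re_intCast, Zsqrtd.im_intCast]
  ring

lemma stuck_row (hd : 4 ≤ d) (k : ℤ) (hk : 1 ≤ k) (r : Zd d) :
    FA hd (cE d k) ≤ FA hd (cE d k * r + dE d k) := by
  rw [FA_le_FA_iff]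
  set z := cE d k * r + dE d k with hz
  have hre : z.re = 4*k*r.re + (2*k+1) := by
    simp [hz, cE, dE, ω, Zsqrtd.re_add, Zsqrtd.re_mul, Zsqrtd.re_intCast, Zsqrtd.im_intCast,
      Zsqrtd.im_add, Zsqrtd.im_mul, Zsqrtd.re_sqrtd, Zsqrtd.im_sqrtd]
  have him : z.im = 4*k*r.im + 2*k := by
    simp [hz, cE, dE, ω, Zsqrtd.re_add, Zsqrtd.re_mul, Zsqrtd.re_intCast, Zsqrtd.im_intCast,
      Zsqrtd.im_add, Zsqrtd.im_mul, Zsqrtd.re_sqrtd, Zsqrtd.im_sqrtd]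
  have hnz : Zsqrtd.norm z = z.re * z.re + d * (z.im * z.im) := by
    simp [Zsqrtd.norm]; ring
  rw [norm_c, hnz, hre, him]
  have hsq : 1 ≤ (2*r.im + 1)*(2*r.im + 1) := by
    rcases le_or_gt 0 r.im with h | h
    · nlinarith
    · have : r.im ≤ -1 := by omega
      nlinarith
  nlinarith [mul_self_nonneg (4*k*r.re + (2*k+1)), sq_nonneg k,
    mul_pos (lt_of_lt_of_le (by norm_num : (0:ℤ) < 1) hk) (lt_of_lt_of_le (by norm_num : (0:ℤ) < 1) hk)]

lemma bottom_rowM (X Y : M2 d) :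
    ((X * Y) 1 0, (X * Y) 1 1) = rowM (X 1 0, X 1 1) Y := by
  simp only [rowM, Matrix.mul_apply, Fin.sum_univ_two, Prod.mk.injEq]

lemma gk_bottom (k : ℤ) :
    ((gk d k : M2 d) 1 0, (gk d k : M2 d) 1 1) = (cE d k, dE d k) := by
  simp [gk, gmat]

lemma norm_mono (hd : 4 ≤ d) {a b : ℤ} (hab : (gk d a)⁻¹ * gk d b ∈ Subgroup.closure (Sset d))
    (ha : 1 ≤ a) :
    Zsqrtd.norm (cE d a) ≤ Zsqrtd.norm (cE d b) := by
  have hgb : gk d b = gk d a * ((gk d a)⁻¹ * gk d b) := by group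
  have hrow : ((gk d b : M2 d) 1 0, (gk d b : M2 d) 1 1)
      = rowM (cE d a, dE d a) (((gk d a)⁻¹ * gk d b : SL d) : M2 d) := by
    have hco : ((gk d a : M2 d)) * (((gk d a)⁻¹ * gk d b : SL d) : M2 d) = (gk d b : M2 d) := by
      rw [← Matrix.SpecialLinearGroup.coe_mul, ← hgb]
    rw [← gk_bottom, ← hco]
    exact bottom_rowM _ _
  have hstuck : ∀ r : Zd d, FA hd (cE d a, dE d a).1 ≤ FA hd ((cE d a, dE d a).1 * r + (cE d a, dE d a).2) :=
    fun r => stuck_row hd a ha r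
  have hk := key hd hab (cE d a, dE d a) hstuck
  rw [← hrow] at hk
  have h10 : (gk d b : M2 d) 1 0 = cE d b := by
    have := gk_bottom (d := d) b
    exact congrArg Prod.fst this
  rw [h10] at hk
  rw [← FA_le_FA_iff hd]
  exact hk

theorem main (hd : 4 ≤ d) : (Subgroup.closure (Sset d)).index = 0 := by
  have hinj : Function.Injective
      (fun n : ℕ => ((gk d (n+1) : SL d) : SL d ⧸ Subgroup.closure (Sset d))) := by
    intro i j hij
    simp only at hij
    rw [QuotientGroup.eq] at hij
    have h1 : Zsqrtd.norm (cE d ((i:ℤ)+1)) ≤ Zsqrtd.norm (cE d ((j:ℤ)+1)) := by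
      have := norm_mono hd (a := (i:ℤ)+1) (b := (j:ℤ)+1) (by exact_mod_cast hij) (by omega)
      exact this
    have h2 : Zsqrtd.norm (cE d ((j:ℤ)+1)) ≤ Zsqrtd.norm (cE d ((i:ℤ)+1)) := by
      have hij' : (gk d ((j:ℤ)+1))⁻¹ * gk d ((i:ℤ)+1) ∈ Subgroup.closure (Sset d) := by
        have := inv_mem hij
        simpa [mul_inv_rev] using this
      exact norm_mono hd hij' (by omega)
    rw [norm_c, norm_c] at h1 h2
    have : ((i:ℤ)+1)^2 = ((j:ℤ)+1)^2 := by linarith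
    have : (i:ℤ) = j := by nlinarith
    exact_mod_cast this
  have : Infinite (SL d ⧸ Subgroup.closure (Sset d)) := Infinite.of_injective _ hinj
  rw [Subgroup.index]
  exact Nat.card_eq_zero_of_infinite

end ElemInf

/-- For every integer `d ≥ 4`, the subgroup of `SL(2, ℤ[√−d])` generated
by the upper and lower triangular matrices has infinite index. -/
theorem elementary_subgroup_infinite_index (d : ℤ) (hd : 4 ≤ d) :
    (Subgroup.closure
      {M : Matrix.SpecialLinearGroup (Fin 2) (Zsqrtd (-d)) |
        (M : Matrix (Fin 2) (Fin 2) (Zsqrtd (-d))) 1 0 = 0 ∨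
        (M : Matrix (Fin 2) (Fin 2) (Zsqrtd (-d))) 0 1 = 0}).index = 0 := by
  exact ElemInf.main hd
end

section
/- For every integer d ≥ 4, the subgroup of SL(2, ℤ[√−d]) generated by the upper triangular and lower triangular matrices is not a normal subgroup of SL(2, ℤ[√−d]). -/
set_option maxHeartbeats 1000000
open Matrix

namespace ElemNotNormal

variable {d : ℤ}

def Ew (a : Zsqrtd (-d)) : Matrix (Fin 2) (Fin 2) (Zsqrtd (-d)) := !![a, 1; -1, 0]

def wprod (l : List (Zsqrtd (-d))) : Matrix (Fin 2) (Fin 2) (Zsqrtd (-d)) :=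
  (l.map Ew).prod

def Rep (X : Matrix (Fin 2) (Fin 2) (Zsqrtd (-d))) : Prop :=
  ∃ l : List (Zsqrtd (-d)), X = wprod l ∨ X = - wprod l

def Std (l : List (Zsqrtd (-d))) : Prop :=
  ∀ u v (x s y : Zsqrtd (-d)), l = u ++ x :: s :: y :: v → ¬(s = 0 ∨ s = 1 ∨ s = -1)

def genSet (d : ℤ) : Set (Matrix.SpecialLinearGroup (Fin 2) (Zsqrtd (-d))) :=
  {M | (M : Matrix (Fin 2) (Fin 2) (Zsqrtd (-d))) 1 0 = 0 ∨
       (M : Matrix (Fin 2) (Fin 2) (Zsqrtd (-d))) 0 1 = 0}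

@[simp] lemma wprod_nil : wprod ([] : List (Zsqrtd (-d))) = 1 := rfl

lemma wprod_cons (a : Zsqrtd (-d)) (l : List (Zsqrtd (-d))) :
    wprod (a :: l) = Ew a * wprod l := by
  simp [wprod]

lemma wprod_append (l₁ l₂ : List (Zsqrtd (-d))) :
    wprod (l₁ ++ l₂) = wprod l₁ * wprod l₂ := by
  simp [wprod]

lemma wprod_singleton (a : Zsqrtd (-d)) : wprod [a] = Ew a := by
  simp [wprod]

lemma Ew_inv (a : Zsqrtd (-d)) : Ew a * (Ew 0 * Ew (-a) * Ew 0) = 1 := by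
  simp only [Ew, Matrix.mul_fin_two]
  refine Matrix.ext fun i j => ?_
  fin_cases i <;> fin_cases j <;> simp <;> ring

lemma wprod_inv_exists (l : List (Zsqrtd (-d))) :
    ∃ l', wprod l * wprod l' = 1 := by
  induction l with
  | nil => exact ⟨[], by simp⟩
  | cons a t ih =>
    obtain ⟨t', ht'⟩ := ih
    refine ⟨t' ++ [0, -a, 0], ?_⟩
    have : wprod (t' ++ [0, -a, 0]) = wprod t' * (Ew 0 * Ew (-a) * Ew 0) := by
      rw [wprod_append]
      congr 1
      simp [wprod, mul_assoc]
    rw [wprod_cons, this, mul_assoc, ← mul_assoc (wprod t), ht', one_mul, Ew_inv]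


lemma unit_pm (hd : 4 ≤ d) (α δ : Zsqrtd (-d)) (h : α * δ = 1) :
    (α = 1 ∧ δ = 1) ∨ (α = -1 ∧ δ = -1) := by
  have hn : α.norm * δ.norm = 1 := by
    rw [← Zsqrtd.norm_mul, h]; simp [Zsqrtd.norm_def]
  have hα : 0 ≤ α.norm := Zsqrtd.norm_nonneg (by omega) α
  have hδ : 0 ≤ δ.norm := Zsqrtd.norm_nonneg (by omega) δ
  have h1 : α.norm = 1 := by
    rcases Int.eq_one_of_mul_eq_one_right hα hn with h'
    exact h'
  rw [Zsqrtd.norm_def] at h1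
  -- α.re^2 + d*α.im^2 = 1
  have him : α.im = 0 := by
    by_contra him
    have h2 : 1 ≤ α.im * α.im := by
      rcases lt_or_gt_of_ne him with h' | h' <;> nlinarith
    nlinarith
  have hre : α.re = 1 ∨ α.re = -1 := by
    rw [him] at h1
    simp at h1
    rcases lt_trichotomy α.re 0 with h' | h' | h' <;> [right; skip; left] <;> nlinarith
  rcases hre with h' | h'
  · left
    have hα1 : α = 1 := by
      rw [Zsqrtd.ext_iff]; simp [h', him]
    constructor
    · exact hα1
    · rw [hα1, one_mul] at h; exact h
  · right
    have hα1 : α = -1 := by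
      rw [Zsqrtd.ext_iff]; simp [h', him]
    constructor
    · exact hα1
    · rw [hα1] at h
      have := congrArg (fun z => (-1 : Zsqrtd (-d)) * z) h
      simpa using this

lemma wprod_pair (x y : Zsqrtd (-d)) : wprod [x, y] = Ew x * Ew y := by
  simp [wprod]

lemma up_pos (b : Zsqrtd (-d)) : !![1, b; 0, 1] = - wprod [-b, 0] := by
  rw [wprod_pair]
  simp only [Ew, Matrix.mul_fin_two]
  refine Matrix.ext fun i j => ?_
  fin_cases i <;> fin_cases j <;> simp <;> ring

lemma up_neg (b : Zsqrtd (-d)) : !![-1, b; 0, -1] = wprod [b, 0] := by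
  rw [wprod_pair]
  simp only [Ew, Matrix.mul_fin_two]
  refine Matrix.ext fun i j => ?_
  fin_cases i <;> fin_cases j <;> simp <;> ring

lemma lo_pos (c : Zsqrtd (-d)) : !![1, 0; c, 1] = - wprod [0, c] := by
  rw [wprod_pair]
  simp only [Ew, Matrix.mul_fin_two]
  refine Matrix.ext fun i j => ?_
  fin_cases i <;> fin_cases j <;> simp <;> ring

lemma lo_neg (c : Zsqrtd (-d)) : !![-1, 0; c, -1] = wprod [0, -c] := by
  rw [wprod_pair]
  simp only [Ew, Matrix.mul_fin_two]
  refine Matrix.ext fun i j => ?_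
  fin_cases i <;> fin_cases j <;> simp <;> ring


lemma rep_mul {X Y : Matrix (Fin 2) (Fin 2) (Zsqrtd (-d))} (hX : Rep X) (hY : Rep Y) :
    Rep (X * Y) := by
  obtain ⟨l1, h1⟩ := hX
  obtain ⟨l2, h2⟩ := hY
  refine ⟨l1 ++ l2, ?_⟩
  rw [wprod_append]
  rcases h1 with h1 | h1 <;> rcases h2 with h2 | h2 <;> rw [h1, h2] <;> simp [neg_mul, mul_neg]

lemma rep_of_mem (hd : 4 ≤ d) {M : Matrix.SpecialLinearGroup (Fin 2) (Zsqrtd (-d))}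
    (h : M ∈ Subgroup.closure (genSet d)) : Rep (M : Matrix (Fin 2) (Fin 2) (Zsqrtd (-d))) := by
  induction h using Subgroup.closure_induction with
  | one => exact ⟨[], Or.inl (by simp [wprod])⟩
  | mul x y hx hy ihx ihy =>
    rw [Matrix.SpecialLinearGroup.coe_mul]
    exact rep_mul ihx ihy
  | inv x hx ih =>
    obtain ⟨l, hl⟩ := ih
    obtain ⟨l', hl'⟩ := wprod_inv_exists l
    have hinv : (x : Matrix (Fin 2) (Fin 2) (Zsqrtd (-d))) *
        ((x⁻¹ : Matrix.SpecialLinearGroup (Fin 2) (Zsqrtd (-d))) :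
          Matrix (Fin 2) (Fin 2) (Zsqrtd (-d))) = 1 := by
      rw [← Matrix.SpecialLinearGroup.coe_mul, mul_inv_cancel]
      exact Matrix.SpecialLinearGroup.coe_one
    have hl'l : wprod l' * wprod l = 1 := mul_eq_one_comm.mp hl'
    refine ⟨l', ?_⟩
    rcases hl with h1 | h1
    · left
      calc (↑x⁻¹ : Matrix (Fin 2) (Fin 2) (Zsqrtd (-d)))
          = (wprod l' * wprod l) * ↑x⁻¹ := by rw [hl'l, one_mul]
        _ = wprod l' * (wprod l * ↑x⁻¹) := by rw [mul_assoc]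
        _ = wprod l' := by rw [← h1, hinv, mul_one]
    · right
      calc (↑x⁻¹ : Matrix (Fin 2) (Fin 2) (Zsqrtd (-d)))
          = (wprod l' * wprod l) * ↑x⁻¹ := by rw [hl'l, one_mul]
        _ = wprod l' * (wprod l * ↑x⁻¹) := by rw [mul_assoc]
        _ = wprod l' * (-(↑x * ↑x⁻¹)) := by
              have hml : wprod l = -(↑x : Matrix (Fin 2) (Fin 2) (Zsqrtd (-d))) := by
                rw [h1, neg_neg]
              rw [hml, neg_mul]
        _ = - wprod l' := by rw [hinv, mul_neg, mul_one]
  | mem x hx =>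
    have hdet : (x : Matrix (Fin 2) (Fin 2) (Zsqrtd (-d))) 0 0 *
        (x : Matrix (Fin 2) (Fin 2) (Zsqrtd (-d))) 1 1 -
        (x : Matrix (Fin 2) (Fin 2) (Zsqrtd (-d))) 0 1 *
        (x : Matrix (Fin 2) (Fin 2) (Zsqrtd (-d))) 1 0 = 1 := by
      rw [← Matrix.det_fin_two]
      exact x.2
    have heta := Matrix.eta_fin_two (x : Matrix (Fin 2) (Fin 2) (Zsqrtd (-d)))
    rcases hx with h10 | h01
    · -- x 1 0 = 0, upper triangular
      rw [h10, mul_zero, sub_zero] at hdet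
      set b := (x : Matrix (Fin 2) (Fin 2) (Zsqrtd (-d))) 0 1 with hb
      rw [h10] at heta
      rcases unit_pm hd _ _ hdet with ⟨h00, h11⟩ | ⟨h00, h11⟩
      · rw [h00, h11] at heta
        exact ⟨[-b, 0], Or.inr (by rw [heta]; exact up_pos b)⟩
      · rw [h00, h11] at heta
        exact ⟨[b, 0], Or.inl (by rw [heta]; exact up_neg b)⟩
    · -- x 0 1 = 0, lower triangular
      rw [h01, zero_mul, sub_zero] at hdet
      set c := (x : Matrix (Fin 2) (Fin 2) (Zsqrtd (-d))) 1 0 with hc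
      rw [h01] at heta
      rcases unit_pm hd _ _ hdet with ⟨h00, h11⟩ | ⟨h00, h11⟩
      · rw [h00, h11] at heta
        exact ⟨[0, c], Or.inr (by rw [heta]; exact lo_pos c)⟩
      · rw [h00, h11] at heta
        exact ⟨[0, -c], Or.inl (by rw [heta]; exact lo_neg c)⟩


lemma rel0 (x y : Zsqrtd (-d)) : Ew x * Ew 0 * Ew y = -(Ew (x + y)) := by
  simp only [Ew, Matrix.mul_fin_two]
  refine Matrix.ext fun i j => ?_
  fin_cases i <;> fin_cases j <;> simp <;> ring

lemma rel1 (x y : Zsqrtd (-d)) : Ew x * Ew 1 * Ew y = Ew (x - 1) * Ew (y - 1) := by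
  simp only [Ew, Matrix.mul_fin_two]
  refine Matrix.ext fun i j => ?_
  fin_cases i <;> fin_cases j <;> simp <;> ring

lemma relm1 (x y : Zsqrtd (-d)) : Ew x * Ew (-1) * Ew y = -(Ew (x + 1) * Ew (y + 1)) := by
  simp only [Ew, Matrix.mul_fin_two]
  refine Matrix.ext fun i j => ?_
  fin_cases i <;> fin_cases j <;> simp <;> ring

lemma wprod_mid (u v : List (Zsqrtd (-d))) (x s y : Zsqrtd (-d)) :
    wprod (u ++ x :: s :: y :: v) = wprod u * (Ew x * Ew s * Ew y) * wprod v := by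
  simp [wprod, mul_assoc]

lemma wprod_mid2 (u v : List (Zsqrtd (-d))) (x y : Zsqrtd (-d)) :
    wprod (u ++ x :: y :: v) = wprod u * (Ew x * Ew y) * wprod v := by
  simp [wprod, mul_assoc]

lemma wprod_mid1 (u v : List (Zsqrtd (-d))) (x : Zsqrtd (-d)) :
    wprod (u ++ x :: v) = wprod u * Ew x * wprod v := by
  simp [wprod, mul_assoc]

lemma reduce : ∀ (l : List (Zsqrtd (-d))),
    ∃ l', Std l' ∧ (wprod l = wprod l' ∨ wprod l = - wprod l') := by
  intro l
  generalize hn : l.length = n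
  induction n using Nat.strong_induction_on generalizing l with
  | _ n ih =>
  by_cases hstd : Std l
  · exact ⟨l, hstd, Or.inl rfl⟩
  · unfold Std at hstd
    push_neg at hstd
    obtain ⟨u, v, x, s, y, hl, hs⟩ := hstd
    subst hl
    rcases hs with rfl | rfl | rfl
    · -- s = 0
      set l₂ := u ++ (x + y) :: v with hl₂
      have hlen : l₂.length < n := by
        rw [← hn]; simp [hl₂]
      obtain ⟨l', hstd', hsgn⟩ := ih _ hlen l₂ rfl
      have hw : wprod (u ++ x :: (0:Zsqrtd (-d)) :: y :: v) = - wprod l₂ := by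
        rw [wprod_mid, rel0, hl₂, wprod_mid1]
        simp
      refine ⟨l', hstd', ?_⟩
      rcases hsgn with h | h
      · right; rw [hw, h]
      · left; rw [hw, h, neg_neg]
    · -- s = 1
      set l₂ := u ++ (x - 1) :: (y - 1) :: v with hl₂
      have hlen : l₂.length < n := by
        rw [← hn]; simp [hl₂]
      obtain ⟨l', hstd', hsgn⟩ := ih _ hlen l₂ rfl
      have hw : wprod (u ++ x :: (1:Zsqrtd (-d)) :: y :: v) = wprod l₂ := by
        rw [wprod_mid, rel1, hl₂, wprod_mid2]
      refine ⟨l', hstd', ?_⟩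
      rcases hsgn with h | h
      · left; rw [hw, h]
      · right; rw [hw, h]
    · -- s = -1
      set l₂ := u ++ (x + 1) :: (y + 1) :: v with hl₂
      have hlen : l₂.length < n := by
        rw [← hn]; simp [hl₂]
      obtain ⟨l', hstd', hsgn⟩ := ih _ hlen l₂ rfl
      have hw : wprod (u ++ x :: (-1:Zsqrtd (-d)) :: y :: v) = - wprod l₂ := by
        rw [wprod_mid, relm1, hl₂, wprod_mid2]
        simp
      refine ⟨l', hstd', ?_⟩
      rcases hsgn with h | h
      · right; rw [hw, h]
      · left; rw [hw, h, neg_neg]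


noncomputable def rh (d : ℤ) (hd : 0 ≤ d) : Zsqrtd (-d) →+* ℂ :=
  Zsqrtd.lift ⟨(Real.sqrt d : ℝ) * Complex.I, by
    have hs : (Real.sqrt d) * (Real.sqrt d) = (d : ℝ) := Real.mul_self_sqrt (by exact_mod_cast hd)
    have : ((Real.sqrt d : ℝ) : ℂ) * Complex.I * (((Real.sqrt d : ℝ) : ℂ) * Complex.I)
        = (((Real.sqrt d * Real.sqrt d : ℝ)) : ℂ) * (Complex.I * Complex.I) := by
      push_cast; ring
    rw [this, Complex.I_mul_I, hs]
    push_cast; ring⟩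

lemma rh_apply (hd : 0 ≤ d) (z : Zsqrtd (-d)) :
    rh d hd z = (z.re : ℂ) + (z.im : ℂ) * ((Real.sqrt d : ℝ) * Complex.I) := rfl

lemma rh_normsq (hd : 0 ≤ d) (z : Zsqrtd (-d)) :
    ‖rh d hd z‖ ^ 2 = ((Zsqrtd.norm z : ℤ) : ℝ) := by
  rw [rh_apply]
  have h1 : (z.re : ℂ) + (z.im : ℂ) * ((Real.sqrt d : ℝ) * Complex.I)
      = ((z.re : ℝ) : ℂ) + ((z.im * Real.sqrt d : ℝ) : ℂ) * Complex.I := by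
    push_cast; ring
  rw [h1, Complex.sq_norm, Complex.normSq_add_mul_I]
  have hs : Real.sqrt d * Real.sqrt d = (d : ℝ) := Real.mul_self_sqrt (by exact_mod_cast hd)
  rw [Zsqrtd.norm_def]
  push_cast
  have h2 : ((z.im:ℝ) * Real.sqrt d)^2 = (z.im:ℝ)^2 * (Real.sqrt d * Real.sqrt d) := by ring
  rw [h2, hs]
  ring



lemma big_abs (hd : 0 ≤ d) {b : Zsqrtd (-d)} (hb : 4 ≤ Zsqrtd.norm b) :
    2 ≤ ‖rh d hd b‖ := by
  have h := rh_normsq hd b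
  have hb' : (4:ℝ) ≤ ((Zsqrtd.norm b : ℤ) : ℝ) := by exact_mod_cast hb
  nlinarith [norm_nonneg (rh d hd b), h, hb']

lemma norm_lt_of_abs_lt (hd : 0 ≤ d) {x y : Zsqrtd (-d)}
    (h : ‖rh d hd x‖ < ‖rh d hd y‖) : Zsqrtd.norm x < Zsqrtd.norm y := by
  have hx := rh_normsq hd x
  have hy := rh_normsq hd y
  have : ((Zsqrtd.norm x : ℤ) : ℝ) < ((Zsqrtd.norm y : ℤ) : ℝ) := by
    rw [← hx, ← hy]
    have h0 : (0:ℝ) ≤ ‖rh d hd x‖ := norm_nonneg _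
    nlinarith
  exact_mod_cast this

lemma wprod_snoc (l : List (Zsqrtd (-d))) (b : Zsqrtd (-d)) :
    wprod (l ++ [b]) = wprod l * Ew b := by
  simp [wprod]

lemma growth (hd : 0 ≤ d) : ∀ (l : List (Zsqrtd (-d))), l ≠ [] →
    (∀ a ∈ l, 4 ≤ Zsqrtd.norm a) →
    ‖((wprod l).map (rh d hd)) 0 1‖ < ‖((wprod l).map (rh d hd)) 0 0‖ := by
  intro l
  induction l using List.reverseRecOn with
  | nil => intro h; exact absurd rfl h
  | append_singleton t b ih =>
    intro _ hbig
    have hb : 4 ≤ Zsqrtd.norm b := hbig b (by simp)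
    have hb2 : 2 ≤ ‖rh d hd b‖ := big_abs hd hb
    rcases eq_or_ne t [] with rfl | ht
    · -- single letter
      have : wprod ([] ++ [b]) = Ew b := by simp [wprod]
      rw [this]
      have h01 : ((Ew b).map (rh d hd)) 0 1 = 1 := by
        simp [Ew, Matrix.map_apply]
      have h00 : ((Ew b).map (rh d hd)) 0 0 = rh d hd b := by
        simp [Ew, Matrix.map_apply]
      rw [h01, h00]
      simp only [norm_one]
      linarith
    · have ihh := ih ht (fun a ha => hbig a (by simp [ha]))
      rw [wprod_snoc, Matrix.map_mul]
      set Y := (wprod t).map (rh d hd) with hY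
      have hEb : (Ew b).map (rh d hd) = !![rh d hd b, 1; -1, 0] := by
        refine Matrix.ext fun i j => ?_
        fin_cases i <;> fin_cases j <;> simp [Ew, Matrix.map_apply]
      rw [hEb]
      have h00 : (Y * !![rh d hd b, 1; -1, 0]) 0 0 = Y 0 0 * rh d hd b + Y 0 1 * (-1) := by
        rw [Matrix.mul_apply, Fin.sum_univ_two]; simp
      have h01 : (Y * !![rh d hd b, 1; -1, 0]) 0 1 = Y 0 0 := by
        rw [Matrix.mul_apply, Fin.sum_univ_two]; simp
      rw [h00, h01]
      have htri : ‖Y 0 0 * rh d hd b + Y 0 1 * (-1)‖ ≥ ‖Y 0 0 * rh d hd b‖ - ‖Y 0 1‖ := by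
        have := norm_sub_norm_le (Y 0 0 * rh d hd b) (-(Y 0 1 * (-1)))
        simp only [norm_neg, neg_neg, sub_neg_eq_add] at this
        calc ‖Y 0 0 * rh d hd b + Y 0 1 * (-1)‖
            ≥ ‖Y 0 0 * rh d hd b‖ - ‖Y 0 1 * (-1)‖ := by
              have h' := norm_sub_norm_le (Y 0 0 * rh d hd b) (-(Y 0 1 * (-1)))
              rw [mul_neg_one, ← sub_eq_add_neg]
              simpa [norm_neg] using h'
          _ = ‖Y 0 0 * rh d hd b‖ - ‖Y 0 1‖ := by simp
      rw [norm_mul] at htri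
      nlinarith [norm_nonneg (Y 0 0), norm_nonneg (Y 0 1)]


lemma not_bad_big (hd : 4 ≤ d) {s : Zsqrtd (-d)} (h : ¬(s = 0 ∨ s = 1 ∨ s = -1)) :
    4 ≤ Zsqrtd.norm s := by
  push_neg at h
  obtain ⟨h0, h1, hm1⟩ := h
  rw [Zsqrtd.norm_def]
  rcases eq_or_ne s.im 0 with him | him
  · have hre : s.re ≠ 0 := by
      intro hre; exact h0 (by rw [Zsqrtd.ext_iff]; simp [hre, him])
    have hre1 : s.re ≠ 1 := by
      intro hre; exact h1 (by rw [Zsqrtd.ext_iff]; simp [hre, him])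
    have hrem1 : s.re ≠ -1 := by
      intro hre; exact hm1 (by rw [Zsqrtd.ext_iff]; simp [hre, him])
    have : 2 ≤ s.re ∨ s.re ≤ -2 := by omega
    have hz : -d * s.im * s.im = 0 := by rw [him]; ring
    rcases this with h' | h' <;> nlinarith
  · have : 1 ≤ s.im * s.im := by
      rcases lt_or_gt_of_ne him with h' | h' <;> nlinarith
    nlinarith

/-- every member of `mid` is an interior letter of `a :: (mid ++ [z])` -/

lemma mem_interior {α : Type*} (a z s : α) (mid : List α) (hs : s ∈ mid) :
    ∃ u v x y, a :: (mid ++ [z]) = u ++ x :: s :: y :: v := by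
  obtain ⟨p, q, rfl⟩ := List.mem_iff_append.mp hs
  rcases q.eq_nil_or_concat with rfl | ⟨q', w, rfl⟩
  · -- q = [], y = z
    rcases p.eq_nil_or_concat with rfl | ⟨p', x, rfl⟩
    · exact ⟨[], [], a, z, by simp⟩
    · exact ⟨a :: p', [], x, z, by simp⟩
  · -- q = q' ++ [w]
    rcases q' with _ | ⟨y, q''⟩
    · -- q = [w], y = w
      rcases p.eq_nil_or_concat with rfl | ⟨p', x, rfl⟩
      · exact ⟨[], [z], a, w, by simp⟩
      · exact ⟨a :: p', [z], x, w, by simp⟩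
    · -- q = y :: q'' ++ [w]
      rcases p.eq_nil_or_concat with rfl | ⟨p', x, rfl⟩
      · exact ⟨[], q'' ++ [w] ++ [z], a, y, by simp⟩
      · exact ⟨a :: p', q'' ++ [w] ++ [z], x, y, by simp⟩


lemma entry10 (W : Matrix (Fin 2) (Fin 2) (Zsqrtd (-d))) (a z : Zsqrtd (-d)) :
    (Ew a * W * Ew z) 1 0 = W 0 1 - z * W 0 0 := by
  have h1 : (Ew a * W) 1 0 = -(W 0 0) := by
    rw [Matrix.mul_apply, Fin.sum_univ_two]; simp [Ew]
  have h2 : (Ew a * W) 1 1 = -(W 0 1) := by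
    rw [Matrix.mul_apply, Fin.sum_univ_two]; simp [Ew]
  rw [Matrix.mul_apply, Fin.sum_univ_two, h1, h2]
  simp [Ew]; ring

lemma entry11 (W : Matrix (Fin 2) (Fin 2) (Zsqrtd (-d))) (a z : Zsqrtd (-d)) :
    (Ew a * W * Ew z) 1 1 = -(W 0 0) := by
  have h1 : (Ew a * W) 1 0 = -(W 0 0) := by
    rw [Matrix.mul_apply, Fin.sum_univ_two]; simp [Ew]
  have h2 : (Ew a * W) 1 1 = -(W 0 1) := by
    rw [Matrix.mul_apply, Fin.sum_univ_two]; simp [Ew]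
  rw [Matrix.mul_apply, Fin.sum_univ_two, h1, h2]
  simp [Ew]

lemma criterion (hd : 4 ≤ d) (X : Matrix (Fin 2) (Fin 2) (Zsqrtd (-d))) (hX : Rep X) :
    Zsqrtd.norm (X 1 1) ≤ 1 ∨
    ∃ y : Zsqrtd (-d), Zsqrtd.norm (X 1 0 - y * X 1 1) < Zsqrtd.norm (X 1 1) := by
  have hd0 : (0:ℤ) ≤ d := by omega
  obtain ⟨l0, hl0⟩ := hX
  obtain ⟨l, hstd, hsgn⟩ := reduce l0
  have hXl : X = wprod l ∨ X = - wprod l := by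
    rcases hl0 with h | h <;> rcases hsgn with h' | h'
    · exact Or.inl (h.trans h')
    · exact Or.inr (h.trans h')
    · right; rw [h, h']
    · left; rw [h, h', neg_neg]
  clear hl0 hsgn
  match l, hstd, hXl with
  | [], _, hXl =>
    left
    rcases hXl with h | h <;> rw [h] <;> simp [wprod, Zsqrtd.norm_def]
  | [a], _, hXl =>
    left
    have he : (Ew a) 1 1 = 0 := by simp [Ew]
    rcases hXl with h | h <;> rw [h] <;>
      simp [wprod, he, Zsqrtd.norm_def, Matrix.neg_apply]
  | [a, b], _, hXl =>
    left
    have he : (Ew a * Ew b) 1 1 = -1 := by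
      rw [Matrix.mul_apply, Fin.sum_univ_two]; simp [Ew]
    have hw : wprod [a, b] = Ew a * Ew b := by simp [wprod]
    rcases hXl with h | h <;> rw [h, hw] <;>
      simp [he, Zsqrtd.norm_def, Matrix.neg_apply]
  | a :: b :: c :: t, hstd, hXl =>
    right
    set tail : List (Zsqrtd (-d)) := b :: c :: t with htail_def
    have htail : tail ≠ [] := by simp [htail_def]
    set mid := tail.dropLast with hmid_def
    set z := tail.getLast htail with hz_def
    have hdecomp : a :: b :: c :: t = a :: (mid ++ [z]) := by
      rw [hmid_def, hz_def, List.dropLast_append_getLast htail]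
    have hmidne : mid ≠ [] := by
      have : mid.length = t.length + 1 := by
        simp [hmid_def, htail_def]
      intro h; rw [h] at this; simp at this
    have hbig : ∀ s ∈ mid, 4 ≤ Zsqrtd.norm s := by
      intro s hs
      obtain ⟨u, v, x, y, huv⟩ := mem_interior a z s mid hs
      exact not_bad_big hd (hstd u v x s y (hdecomp.trans huv))
    set W := wprod mid with hW
    have hgrow := growth hd0 mid hmidne hbig
    have hWlt : Zsqrtd.norm (W 0 1) < Zsqrtd.norm (W 0 0) := by
      apply norm_lt_of_abs_lt hd0
      simpa [Matrix.map_apply] using hgrow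
    have hwp : wprod (a :: b :: c :: t) = Ew a * W * Ew z := by
      rw [hdecomp, wprod_cons, wprod_snoc, hW, mul_assoc]
    refine ⟨z, ?_⟩
    rcases hXl with h | h
    · rw [h, hwp, entry10, entry11]
      have h1 : W 0 1 - z * W 0 0 - z * -(W 0 0) = W 0 1 := by ring
      rw [h1, Zsqrtd.norm_neg]
      exact hWlt
    · rw [h, hwp]
      rw [show (-(Ew a * W * Ew z)) 1 0 = -((Ew a * W * Ew z) 1 0) from rfl]
      rw [show (-(Ew a * W * Ew z)) 1 1 = -((Ew a * W * Ew z) 1 1) from rfl]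
      rw [entry10, entry11]
      have h1 : -(W 0 1 - z * W 0 0) - z * - -(W 0 0) = -(W 0 1) := by ring
      rw [h1, neg_neg, Zsqrtd.norm_neg]
      exact hWlt


lemma final_ineq (d y1 y2 : ℤ) (hd : 4 ≤ d) :
    4*d^2+8*d+1 ≤ (d*d+d+1 + (2*d+1)*y1 + 2*d*y2)^2 + d*(-2*d-2 - 2*y1 + (2*d+1)*y2)^2 := by
  set M : ℤ := 4*d^2+8*d+1 with hM
  set vre : ℤ := d*d+d+1 + (2*d+1)*y1 + 2*d*y2 with hvre
  set vim : ℤ := -2*d-2 - 2*y1 + (2*d+1)*y2 with hvim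
  set z1 : ℤ := -(2*d+1)*(d*d+d+1) - 4*d*(d+1) - M*y1 with hz1
  set z2 : ℤ := 2*d*(d+2) - M*y2 with hz2
  have hid : (vre^2 + d*vim^2) * M = z1^2 + d*z2^2 := by
    rw [hvre, hvim, hz1, hz2, hM]; ring
  have hMpos : 0 < M := by nlinarith
  -- reduce to z-inequality
  have hzle : M^2 ≤ z1^2 + d*z2^2 → M ≤ vre^2 + d*vim^2 := by
    intro h
    by_contra hcon
    push_neg at hcon
    have h1 : (vre^2 + d*vim^2) * M < M * M := by
      have := mul_lt_mul_of_pos_right hcon hMpos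
      linarith [this]
    rw [hid] at h1
    nlinarith
  apply hzle
  rcases eq_or_lt_of_le hd with heq | hgt
  · -- d = 4
    subst heq
    have hz1b : 193 ≤ z1^2 := by
      have : z1 = -269 - 97*y1 := by rw [hz1, hM]; ring
      rw [this]
      rcases le_or_gt y1 (-3) with h' | h' <;> nlinarith
    have hz2e : z2 = 48 - 97*y2 := by rw [hz2, hM]; ring
    rcases le_or_gt y2 0 with h' | h'
    · have : 48 ≤ z2 := by rw [hz2e]; nlinarith
      nlinarith
    · have : z2 ≤ -49 := by rw [hz2e]; nlinarith
      nlinarith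
  · -- d ≥ 5
    have hd5 : 5 ≤ d := hgt
    have hz2sq : (2*d*(d+2))^2 ≤ z2^2 := by
      rcases le_or_gt y2 0 with h' | h'
      · have h1 : 2*d*(d+2) ≤ z2 := by
          rw [hz2]
          nlinarith
        nlinarith
      · have h1 : z2 ≤ -(2*d*(d+2)+1) := by
          rw [hz2]
          have : 1 ≤ y2 := h'
          nlinarith
        nlinarith
    have hd0 : (0:ℤ) ≤ d := by linarith
    have e2 : 5*d ≤ d^2 := by nlinarith
    have e3 : 5*d^2 ≤ d^3 := by nlinarith [mul_le_mul_of_nonneg_left e2 hd0]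
    have e4 : 5*d^3 ≤ d^4 := by nlinarith [mul_le_mul_of_nonneg_left e3 hd0]
    have e5 : 5*d^4 ≤ d^5 := by nlinarith [mul_le_mul_of_nonneg_left e4 hd0]
    have hkey : M^2 ≤ d*(2*d*(d+2))^2 := by
      have hL : M^2 = 16*d^4+64*d^3+72*d^2+16*d+1 := by rw [hM]; ring
      have hR : d*(2*d*(d+2))^2 = 4*d^5+16*d^4+16*d^3 := by ring
      rw [hL, hR]
      linarith
    calc M^2 ≤ d*(2*d*(d+2))^2 := hkey
      _ ≤ d*z2^2 := mul_le_mul_of_nonneg_left hz2sq hd0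
      _ ≤ z1^2 + d*z2^2 := by nlinarith [sq_nonneg z1]


end ElemNotNormal

open ElemNotNormal in
/-- For every integer `d ≥ 4`, the subgroup of `SL(2, ℤ[√−d])` generated
by the upper and lower triangular matrices is not a normal subgroup. -/
theorem elementary_subgroup_not_normal (d : ℤ) (hd : 4 ≤ d) :
    ¬ (Subgroup.closure
      {M : Matrix.SpecialLinearGroup (Fin 2) (Zsqrtd (-d)) |
        (M : Matrix (Fin 2) (Fin 2) (Zsqrtd (-d))) 1 0 = 0 ∨
        (M : Matrix (Fin 2) (Fin 2) (Zsqrtd (-d))) 0 1 = 0}).Normal := by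
  intro hN
  obtain ⟨k, hk⟩ : ∃ k : ℤ, (d+1)*(d+2) = 2*k := by
    obtain ⟨r, hr⟩ := Int.even_mul_succ_self (d+1)
    exact ⟨r, by linarith [hr]⟩
  -- elements of Zsqrtd (-d)
  set w : Zsqrtd (-d) := ⟨d+1, -1⟩ with hw
  set wb : Zsqrtd (-d) := ⟨d+1, 1⟩ with hwb
  set kk : Zsqrtd (-d) := ⟨k, 0⟩ with hkk
  set two : Zsqrtd (-d) := ⟨2, 0⟩ with htwo
  have hdetg : Matrix.det !![two, wb; w, kk] = 1 := by
    rw [Matrix.det_fin_two_of, Zsqrtd.ext_iff]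
    constructor
    · simp [Zsqrtd.re_sub, Zsqrtd.re_mul, htwo, hkk, hwb, hw]
      linarith [hk]
    · simp [Zsqrtd.im_sub, Zsqrtd.im_mul, htwo, hkk, hwb, hw]
  have hdeth : Matrix.det !![kk, -wb; -w, two] = 1 := by
    rw [Matrix.det_fin_two_of, Zsqrtd.ext_iff]
    constructor
    · simp [Zsqrtd.re_sub, Zsqrtd.re_mul, htwo, hkk, hwb, hw]
      linarith [hk]
    · simp [Zsqrtd.im_sub, Zsqrtd.im_mul, htwo, hkk, hwb, hw]
  have hdett : Matrix.det !![(1 : Zsqrtd (-d)), -1; 0, 1] = 1 := by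
    rw [Matrix.det_fin_two_of]; ring
  set g : Matrix.SpecialLinearGroup (Fin 2) (Zsqrtd (-d)) := ⟨_, hdetg⟩ with hg
  set gi : Matrix.SpecialLinearGroup (Fin 2) (Zsqrtd (-d)) := ⟨_, hdeth⟩ with hgi
  set t : Matrix.SpecialLinearGroup (Fin 2) (Zsqrtd (-d)) := ⟨_, hdett⟩ with htt
  have ht : t ∈ {M : Matrix.SpecialLinearGroup (Fin 2) (Zsqrtd (-d)) |
        (M : Matrix (Fin 2) (Fin 2) (Zsqrtd (-d))) 1 0 = 0 ∨
        (M : Matrix (Fin 2) (Fin 2) (Zsqrtd (-d))) 0 1 = 0} := by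
    left
    rw [htt]
    simp
  have hgmul : g * gi = 1 := by
    apply Subtype.ext
    rw [Matrix.SpecialLinearGroup.coe_mul, hg, hgi]
    show (!![two, wb; w, kk] : Matrix (Fin 2) (Fin 2) (Zsqrtd (-d))) * !![kk, -wb; -w, two] = _
    rw [Matrix.mul_fin_two, Matrix.SpecialLinearGroup.coe_one]
    refine Matrix.ext fun i j => ?_
    fin_cases i <;> fin_cases j <;>
      simp [Matrix.one_apply] <;>
      rw [Zsqrtd.ext_iff] <;>
      constructor <;>
      simp [Zsqrtd.re_mul, Zsqrtd.im_mul, htwo, hkk, hwb, hw] <;>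
      linarith [hk]
  have hginv : g⁻¹ = gi := inv_eq_of_mul_eq_one_right hgmul
  have hmem := hN.conj_mem t (Subgroup.subset_closure ht) g
  have hrep := rep_of_mem hd hmem
  have hcoe : ((g * t * g⁻¹ : Matrix.SpecialLinearGroup (Fin 2) (Zsqrtd (-d))) :
      Matrix (Fin 2) (Fin 2) (Zsqrtd (-d))) =
      !![two, wb; w, kk] * !![(1 : Zsqrtd (-d)), -1; 0, 1] * !![kk, -wb; -w, two] := by
    rw [hginv, Matrix.SpecialLinearGroup.coe_mul, Matrix.SpecialLinearGroup.coe_mul, hg, hgi, htt]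
  have hX10 : ((g * t * g⁻¹ : Matrix.SpecialLinearGroup (Fin 2) (Zsqrtd (-d))) :
      Matrix (Fin 2) (Fin 2) (Zsqrtd (-d))) 1 0 = ⟨d*d+d+1, -2*d-2⟩ := by
    rw [hcoe, Matrix.mul_fin_two, Matrix.mul_fin_two]
    simp only [Matrix.cons_val', Matrix.cons_val_zero, Matrix.cons_val_one, Matrix.head_cons,
      Matrix.head_fin_const, Matrix.empty_val', Matrix.cons_val_fin_one, Matrix.of_apply]
    rw [Zsqrtd.ext_iff]
    constructor <;>
      simp [Zsqrtd.re_mul, Zsqrtd.im_mul, htwo, hkk, hwb, hw] <;>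
      ring
  have hX11 : ((g * t * g⁻¹ : Matrix.SpecialLinearGroup (Fin 2) (Zsqrtd (-d))) :
      Matrix (Fin 2) (Fin 2) (Zsqrtd (-d))) 1 1 = ⟨-2*d-1, 2⟩ := by
    rw [hcoe, Matrix.mul_fin_two, Matrix.mul_fin_two]
    simp only [Matrix.cons_val', Matrix.cons_val_zero, Matrix.cons_val_one, Matrix.head_cons,
      Matrix.head_fin_const, Matrix.empty_val', Matrix.cons_val_fin_one, Matrix.of_apply]
    rw [Zsqrtd.ext_iff]
    constructor <;>
      simp [Zsqrtd.re_mul, Zsqrtd.im_mul, htwo, hkk, hwb, hw] <;>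
      linarith [hk]
  rcases criterion hd _ hrep with hle | ⟨y, hy⟩
  · rw [hX11, Zsqrtd.norm_def] at hle
    simp only at hle
    nlinarith
  · rw [hX10, hX11] at hy
    have hvre : ((⟨d*d+d+1, -2*d-2⟩ : Zsqrtd (-d)) - y * ⟨-2*d-1, 2⟩).re
        = d*d+d+1 + (2*d+1)*y.re + 2*d*y.im := by
      simp [Zsqrtd.re_sub, Zsqrtd.re_mul]
      ring
    have hvim : ((⟨d*d+d+1, -2*d-2⟩ : Zsqrtd (-d)) - y * ⟨-2*d-1, 2⟩).im
        = -2*d-2 - 2*y.re + (2*d+1)*y.im := by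
      simp [Zsqrtd.im_sub, Zsqrtd.im_mul]
      ring
    rw [Zsqrtd.norm_def, Zsqrtd.norm_def, hvre, hvim] at hy
    simp only at hy
    have := final_ineq d y.re y.im hd
    nlinarith [this, hy]
end

section
/- For every integer d ≥ 4, the ring ℤ[√−d] is not semi-Euclidean: there do not exist a linearly ordered set W whose strict order is well-founded and a function Φ : ℤ[√−d] → W such that for all a, b ∈ ℤ[√−d] with b ≠ 0 and with a·x + b·y = 1 solvable for some x, y ∈ ℤ[√−d], there exists q with Φ(a − b·q) < Φ(b). -/
namespace NotSemiEuclid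

variable {d : ℤ}

/-- The pair of columns of the matrix `B(q₁)⋯B(qₘ)` where the list is `[qₘ, …, q₁]`
and `B(q) = [[q,1],[1,0]]`.  `(Gm l).1` is the first column (top, bottom). -/
def Gm : List (Zsqrtd (-d)) → ((Zsqrtd (-d) × Zsqrtd (-d)) × (Zsqrtd (-d) × Zsqrtd (-d)))
  | [] => ((1, 0), (0, 1))
  | q :: l => ((q * (Gm l).1.1 + (Gm l).2.1, q * (Gm l).1.2 + (Gm l).2.2), (Gm l).1)

/-- A terminating division chain from the pair `(a,b)` with quotients `l`. -/
def Chn : Zsqrtd (-d) → Zsqrtd (-d) → List (Zsqrtd (-d)) → Prop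
  | _, b, [] => b = 0
  | a, b, q :: l => Chn b (a - b * q) l

def Um (a b : Zsqrtd (-d)) : Prop := ∃ x y : Zsqrtd (-d), a * x + b * y = 1

def Big (q : Zsqrtd (-d)) : Prop := q ≠ 0 ∧ q ≠ 1 ∧ q ≠ -1

/-- all big but last -/
def ABL (l : List (Zsqrtd (-d))) : Prop := ∀ q ∈ l.dropLast, Big q

/-- standard word: all letters except first and last are big -/
def Std : List (Zsqrtd (-d)) → Prop
  | [] => True
  | _ :: t => ABL t

def Sgn (s : Zsqrtd (-d)) : Prop := s = 1 ∨ s = -1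

def Rel (l₁ l₂ : List (Zsqrtd (-d))) (s t : Zsqrtd (-d)) : Prop :=
  (Gm l₁).1.1 = s * (Gm l₂).1.1 ∧ (Gm l₁).1.2 = s * (Gm l₂).1.2 ∧
  (Gm l₁).2.1 = t * (Gm l₂).2.1 ∧ (Gm l₁).2.2 = t * (Gm l₂).2.2

def aa : Zsqrtd (-d) := ⟨d + 1, 1⟩

/-! ### basic sign lemmas -/

lemma Sgn.one : Sgn (1 : Zsqrtd (-d)) := Or.inl rfl

lemma Sgn.mul {s t : Zsqrtd (-d)} (hs : Sgn s) (ht : Sgn t) : Sgn (s * t) := by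
  rcases hs with rfl | rfl <;> rcases ht with rfl | rfl <;> simp [Sgn]

lemma Sgn.neg {s : Zsqrtd (-d)} (hs : Sgn s) : Sgn (-s) := by
  rcases hs with rfl | rfl <;> simp [Sgn]

lemma Sgn.sq {s : Zsqrtd (-d)} (hs : Sgn s) : s * s = 1 := by
  rcases hs with rfl | rfl <;> ring

/-! ### ABL helpers -/

lemma abl_nil : ABL ([] : List (Zsqrtd (-d))) := by intro q hq; simp [List.dropLast] at hq

lemma abl_single (x : Zsqrtd (-d)) : ABL [x] := by intro q hq; simp [List.dropLast] at hq

lemma abl_cons_cons {x y : Zsqrtd (-d)} {t : List (Zsqrtd (-d))} :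
    ABL (x :: y :: t) ↔ Big x ∧ ABL (y :: t) := by
  constructor
  · intro h
    refine ⟨h x (by simp [List.dropLast]), fun q hq => h q (by simp [List.dropLast]; right; exact hq)⟩
  · rintro ⟨hx, h⟩ q hq
    simp [List.dropLast] at hq
    rcases hq with rfl | hq
    · exact hx
    · exact h q hq

lemma abl_tail {x : Zsqrtd (-d)} {t : List (Zsqrtd (-d))} (h : ABL (x :: t)) : ABL t := by
  cases t with
  | nil => exact abl_nil
  | cons y t => exact (abl_cons_cons.mp h).2

/-! ### Rel lemmas -/

lemma rel_refl (l : List (Zsqrtd (-d))) : Rel l l 1 1 := by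
  refine ⟨by ring, by ring, by ring, by ring⟩

lemma rel_trans {l₁ l₂ l₃ : List (Zsqrtd (-d))} {s t s' t' : Zsqrtd (-d)}
    (h : Rel l₁ l₂ s t) (h' : Rel l₂ l₃ s' t') : Rel l₁ l₃ (s * s') (t * t') := by
  obtain ⟨a1, a2, a3, a4⟩ := h
  obtain ⟨b1, b2, b3, b4⟩ := h'
  exact ⟨by rw [a1, b1]; ring, by rw [a2, b2]; ring, by rw [a3, b3]; ring, by rw [a4, b4]; ring⟩

/-- rewriting when the second letter is `0` -/
lemma rel_rw0 (a c : Zsqrtd (-d)) (r : List (Zsqrtd (-d))) :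
    Rel (a :: (0 : Zsqrtd (-d)) :: c :: r) ((a + c) :: r) 1 1 := by
  refine ⟨?_, ?_, ?_, ?_⟩ <;> simp only [Gm] <;> ring

/-- rewriting when the second letter is `1` -/
lemma rel_rw1 (a c : Zsqrtd (-d)) (r : List (Zsqrtd (-d))) :
    Rel (a :: (1 : Zsqrtd (-d)) :: c :: r) ((-a - 1) :: (c + 1) :: r) (-1) 1 := by
  refine ⟨?_, ?_, ?_, ?_⟩ <;> simp only [Gm] <;> ring

/-- rewriting when the second letter is `-1` -/
lemma rel_rwm1 (a c : Zsqrtd (-d)) (r : List (Zsqrtd (-d))) :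
    Rel (a :: (-1 : Zsqrtd (-d)) :: c :: r) ((1 - a) :: (c - 1) :: r) 1 (-1) := by
  refine ⟨?_, ?_, ?_, ?_⟩ <;> simp only [Gm] <;> ring

/-- prepend a letter, equal signs case -/
lemma rel_cons {T T' : List (Zsqrtd (-d))} {s : Zsqrtd (-d)} (a : Zsqrtd (-d))
    (h : Rel T T' s s) : Rel (a :: T) (a :: T') s s := by
  obtain ⟨a1, a2, a3, a4⟩ := h
  refine ⟨?_, ?_, ?_, ?_⟩ <;> simp only [Gm]
  · rw [a1, a3]; ring
  · rw [a2, a4]; ring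
  · rw [a1]
  · rw [a2]

/-- prepend a letter, opposite signs case -/
lemma rel_cons_neg {T T' : List (Zsqrtd (-d))} {s : Zsqrtd (-d)} (a : Zsqrtd (-d))
    (h : Rel T T' s (-s)) : Rel (a :: T) ((-a) :: T') (-s) s := by
  obtain ⟨a1, a2, a3, a4⟩ := h
  refine ⟨?_, ?_, ?_, ?_⟩ <;> simp only [Gm]
  · rw [a1, a3]; ring
  · rw [a2, a4]; ring
  · rw [a1]
  · rw [a2]

/-! ### the trichotomy -/

lemma small_or_big (q : Zsqrtd (-d)) : q = 0 ∨ q = 1 ∨ q = -1 ∨ Big q := by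
  by_cases h0 : q = 0
  · exact Or.inl h0
  by_cases h1 : q = 1
  · exact Or.inr (Or.inl h1)
  by_cases h2 : q = -1
  · exact Or.inr (Or.inr (Or.inl h2))
  · exact Or.inr (Or.inr (Or.inr ⟨h0, h1, h2⟩))


/-- combine a new head letter with an existing relation -/
lemma rel_cons_any {T T' : List (Zsqrtd (-d))} {s t : Zsqrtd (-d)}
    (hs : Sgn s) (ht : Sgn t) (h : Rel T T' s t) (a : Zsqrtd (-d)) :
    ∃ a₂ s₂ t₂ : Zsqrtd (-d), Sgn s₂ ∧ Sgn t₂ ∧ Rel (a :: T) (a₂ :: T') s₂ t₂ := by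
  rcases hs with rfl | rfl <;> rcases ht with rfl | rfl
  · exact ⟨a, 1, 1, Sgn.one, Sgn.one, rel_cons a h⟩
  · exact ⟨-a, -1, 1, Sgn.one.neg, Sgn.one, rel_cons_neg a h⟩
  · have h' : Rel T T' (-1) (-(-1)) := by rw [neg_neg]; exact h
    have h2 := rel_cons_neg a h'
    rw [neg_neg] at h2
    exact ⟨-a, 1, -1, Sgn.one, Sgn.one.neg, h2⟩
  · exact ⟨a, -1, -1, Sgn.one.neg, Sgn.one.neg, rel_cons a h⟩

/-- one reduction step at the head when the second letter is small -/
lemma head_small_reduce {u : Zsqrtd (-d)} (hu : u = 0 ∨ u = 1 ∨ u = -1)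
    (a c : Zsqrtd (-d)) (r : List (Zsqrtd (-d))) :
    ∃ l₂ s t, Sgn s ∧ Sgn t ∧ l₂ ≠ [] ∧ l₂.length ≤ r.length + 2 ∧
      Rel (a :: u :: c :: r) l₂ s t := by
  rcases hu with rfl | rfl | rfl
  · exact ⟨(a + c) :: r, 1, 1, Sgn.one, Sgn.one, List.cons_ne_nil _ _, by simp, rel_rw0 a c r⟩
  · exact ⟨(-a - 1) :: (c + 1) :: r, -1, 1, Sgn.one.neg, Sgn.one, List.cons_ne_nil _ _, by simp,
      rel_rw1 a c r⟩
  · exact ⟨(1 - a) :: (c - 1) :: r, 1, -1, Sgn.one, Sgn.one.neg, List.cons_ne_nil _ _, by simp,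
      rel_rwm1 a c r⟩

/-- Normalization: every word is sign-equivalent (columnwise) to a standard word. -/
lemma phaseN : ∀ n (l : List (Zsqrtd (-d))), l.length ≤ n →
    ∃ l' s t, Sgn s ∧ Sgn t ∧ Std l' ∧ (l ≠ [] → l' ≠ []) ∧ l'.length ≤ l.length ∧
      Rel l l' s t := by
  intro n
  induction n with
  | zero =>
    intro l hl
    have hnil : l = [] := List.eq_nil_of_length_eq_zero (Nat.le_zero.mp hl)
    subst hnil
    exact ⟨[], 1, 1, Sgn.one, Sgn.one, trivial, fun h => absurd rfl h, le_refl _, rel_refl _⟩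
  | succ n ih =>
    intro l hl
    match l with
    | [] => exact ⟨[], 1, 1, Sgn.one, Sgn.one, trivial, fun h => absurd rfl h, le_refl _, rel_refl _⟩
    | [a] =>
      exact ⟨[a], 1, 1, Sgn.one, Sgn.one, abl_nil, fun _ => List.cons_ne_nil _ _, le_refl _,
        rel_refl _⟩
    | [a, b] =>
      exact ⟨[a, b], 1, 1, Sgn.one, Sgn.one, abl_single b, fun _ => List.cons_ne_nil _ _,
        le_refl _, rel_refl _⟩
    | a :: b :: c :: r =>
      have hlen3 : (a :: b :: c :: r).length = r.length + 3 := by simp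
      rcases small_or_big b with hb | hb | hb | hb
      · -- small second letter: reduce at the head
        obtain ⟨l₂, s₀, t₀, hs₀, ht₀, hne₂, hlen₂, hrel₂⟩ :=
          head_small_reduce (d := d) (Or.inl hb) a c r
        obtain ⟨l', s, t, hs, ht, hstd, hne, hlen, hrel⟩ := ih l₂ (by simp at hl; omega)
        exact ⟨l', s₀ * s, t₀ * t, hs₀.mul hs, ht₀.mul ht, hstd, fun _ => hne hne₂,
          by simp; omega, rel_trans hrel₂ hrel⟩
      · obtain ⟨l₂, s₀, t₀, hs₀, ht₀, hne₂, hlen₂, hrel₂⟩ :=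
          head_small_reduce (d := d) (Or.inr (Or.inl hb)) a c r
        obtain ⟨l', s, t, hs, ht, hstd, hne, hlen, hrel⟩ := ih l₂ (by simp at hl; omega)
        exact ⟨l', s₀ * s, t₀ * t, hs₀.mul hs, ht₀.mul ht, hstd, fun _ => hne hne₂,
          by simp; omega, rel_trans hrel₂ hrel⟩
      · obtain ⟨l₂, s₀, t₀, hs₀, ht₀, hne₂, hlen₂, hrel₂⟩ :=
          head_small_reduce (d := d) (Or.inr (Or.inr hb)) a c r
        obtain ⟨l', s, t, hs, ht, hstd, hne, hlen, hrel⟩ := ih l₂ (by simp at hl; omega)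
        exact ⟨l', s₀ * s, t₀ * t, hs₀.mul hs, ht₀.mul ht, hstd, fun _ => hne hne₂,
          by simp; omega, rel_trans hrel₂ hrel⟩
      · -- big second letter: normalize the tail
        obtain ⟨T', s, t, hs, ht, hstdT, hneT, hlenT, hrelT⟩ :=
          ih (b :: c :: r) (by simp at hl ⊢; omega)
        match T' with
        | [] => exact absurd rfl (hneT (List.cons_ne_nil _ _))
        | b' :: T'' =>
          obtain ⟨a₂, s₂, t₂, hs₂, ht₂, hrel₂⟩ := rel_cons_any hs ht hrelT a
          rcases small_or_big b' with hb' | hb' | hb' | hbig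
          · cases T'' with
            | nil =>
              refine ⟨[a₂, b'], s₂, t₂, hs₂, ht₂, abl_single b', fun _ => List.cons_ne_nil _ _,
                by simp, hrel₂⟩
            | cons c' r'' =>
              obtain ⟨l₃, s₃, t₃, hs₃, ht₃, hne₃, hlen₃, hrel₃⟩ :=
                head_small_reduce (d := d) (u := b') (by tauto) a₂ c' r''
              have hlenT' : r''.length + 2 ≤ n := by
                have := hlenT; simp at this hl ⊢; omega
              obtain ⟨l', s', t', hs', ht', hstd', hne', hlen', hrel'⟩ :=
                ih l₃ (le_trans hlen₃ hlenT')
              refine ⟨l', s₂ * (s₃ * s'), t₂ * (t₃ * t'), hs₂.mul (hs₃.mul hs'),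
                ht₂.mul (ht₃.mul ht'), hstd', fun _ => hne' hne₃, ?_,
                rel_trans hrel₂ (rel_trans hrel₃ hrel')⟩
              have := hlenT; simp at this hl ⊢; omega
          · cases T'' with
            | nil =>
              refine ⟨[a₂, b'], s₂, t₂, hs₂, ht₂, abl_single b', fun _ => List.cons_ne_nil _ _,
                by simp, hrel₂⟩
            | cons c' r'' =>
              obtain ⟨l₃, s₃, t₃, hs₃, ht₃, hne₃, hlen₃, hrel₃⟩ :=
                head_small_reduce (d := d) (u := b') (by tauto) a₂ c' r''
              have hlenT' : r''.length + 2 ≤ n := by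
                have := hlenT; simp at this hl ⊢; omega
              obtain ⟨l', s', t', hs', ht', hstd', hne', hlen', hrel'⟩ :=
                ih l₃ (le_trans hlen₃ hlenT')
              refine ⟨l', s₂ * (s₃ * s'), t₂ * (t₃ * t'), hs₂.mul (hs₃.mul hs'),
                ht₂.mul (ht₃.mul ht'), hstd', fun _ => hne' hne₃, ?_,
                rel_trans hrel₂ (rel_trans hrel₃ hrel')⟩
              have := hlenT; simp at this hl ⊢; omega
          · cases T'' with
            | nil =>
              refine ⟨[a₂, b'], s₂, t₂, hs₂, ht₂, abl_single b', fun _ => List.cons_ne_nil _ _,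
                by simp, hrel₂⟩
            | cons c' r'' =>
              obtain ⟨l₃, s₃, t₃, hs₃, ht₃, hne₃, hlen₃, hrel₃⟩ :=
                head_small_reduce (d := d) (u := b') (by tauto) a₂ c' r''
              have hlenT' : r''.length + 2 ≤ n := by
                have := hlenT; simp at this hl ⊢; omega
              obtain ⟨l', s', t', hs', ht', hstd', hne', hlen', hrel'⟩ :=
                ih l₃ (le_trans hlen₃ hlenT')
              refine ⟨l', s₂ * (s₃ * s'), t₂ * (t₃ * t'), hs₂.mul (hs₃.mul hs'),
                ht₂.mul (ht₃.mul ht'), hstd', fun _ => hne' hne₃, ?_,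
                rel_trans hrel₂ (rel_trans hrel₃ hrel')⟩
              have := hlenT; simp at this hl ⊢; omega
          · -- b' is big : the combined word is standard
            have hstd2 : Std (a₂ :: b' :: T'') := by
              show ABL (b' :: T'')
              cases T'' with
              | nil => exact abl_single b'
              | cons c' r'' => exact abl_cons_cons.mpr ⟨hbig, hstdT⟩
            refine ⟨a₂ :: b' :: T'', s₂, t₂, hs₂, ht₂, hstd2, fun _ => List.cons_ne_nil _ _,
              ?_, hrel₂⟩
            have := hlenT
            simp at this ⊢
            omega

lemma gm_11_cons (q : Zsqrtd (-d)) (l : List (Zsqrtd (-d))) :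
    (Gm (q :: l)).1.1 = q * (Gm l).1.1 + (Gm l).2.1 := rfl
lemma gm_12_cons (q : Zsqrtd (-d)) (l : List (Zsqrtd (-d))) :
    (Gm (q :: l)).1.2 = q * (Gm l).1.2 + (Gm l).2.2 := rfl
lemma gm_21_cons (q : Zsqrtd (-d)) (l : List (Zsqrtd (-d))) :
    (Gm (q :: l)).2.1 = (Gm l).1.1 := rfl
lemma gm_22_cons (q : Zsqrtd (-d)) (l : List (Zsqrtd (-d))) :
    (Gm (q :: l)).2.2 = (Gm l).1.2 := rfl

lemma abs_add_ge (x y : ℂ) : ‖x‖ - ‖y‖ ≤ ‖x + y‖ := by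
  have := norm_add_le (x + y) (-y)
  simp at this
  linarith

/-- Growth of the bottom entries of the first column along words whose
letters (except maybe the last one) are all big. -/
lemma growth (f : Zsqrtd (-d) →+* ℂ) (hf : ∀ q, Big q → 2 ≤ ‖f q‖) :
    ∀ (T : List (Zsqrtd (-d))) (x : Zsqrtd (-d)), T ≠ [] → ABL (x :: T) →
      1 + ‖f (Gm T).1.2‖ ≤ ‖f (Gm (x :: T)).1.2‖ ∧
      1 ≤ ‖f (Gm T).1.2‖ := by
  intro T
  induction T with
  | nil => intro x h; exact absurd rfl h
  | cons y T' ihT =>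
    intro x _ habl
    obtain ⟨hx, htail⟩ := abl_cons_cons.mp habl
    have hfx := hf x hx
    cases T' with
    | nil =>
      have e1 : (Gm ([y] : List (Zsqrtd (-d)))).1.2 = 1 := by simp [Gm]
      have e2 : (Gm ([x, y] : List (Zsqrtd (-d)))).1.2 = x := by simp [Gm]
      rw [e1, e2, map_one]
      simp only [map_one, norm_one]
      constructor
      · linarith
      · linarith [norm_one (α := ℂ)]
    | cons z T'' =>
      obtain ⟨ih1, ih2⟩ := ihT y (List.cons_ne_nil _ _) htail
      -- σ (x :: y :: z :: T'') = x * σ (y::z::T'') + σ (z::T'')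
      have e : (Gm (x :: y :: z :: T'')).1.2
          = x * (Gm (y :: z :: T'')).1.2 + (Gm (z :: T'')).1.2 := by
        rw [gm_12_cons, gm_22_cons]
      set A := ‖f (Gm (y :: z :: T'')).1.2‖ with hA
      set B := ‖f (Gm (z :: T'')).1.2‖ with hB
      have key : 2 * A - B ≤ ‖f (Gm (x :: y :: z :: T'')).1.2‖ := by
        rw [e, map_add, map_mul]
        have h1 := abs_add_ge (f x * f (Gm (y :: z :: T'')).1.2) (f (Gm (z :: T'')).1.2)
        rw [norm_mul] at h1
        have h2 : 2 * A ≤ ‖f x‖ * A := by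
          have : (0:ℝ) ≤ A := norm_nonneg _
          nlinarith
        linarith
      constructor
      · linarith
      · linarith

/-- Main obstruction: no standard word has first column `± (aa, 2)`. -/
lemma lemmaM (f : Zsqrtd (-d) →+* ℂ) (hf : ∀ q, Big q → 2 ≤ ‖f q‖) :
    ∀ n (l : List (Zsqrtd (-d))), l.length ≤ n → Std l → ∀ ε : Zsqrtd (-d), Sgn ε →
      ¬((Gm l).1.1 = ε * aa ∧ (Gm l).1.2 = ε * 2) := by
  intro n
  induction n with
  | zero =>
    intro l hl _ ε hε ⟨_, h2⟩
    have hnil : l = [] := List.eq_nil_of_length_eq_zero (Nat.le_zero.mp hl)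
    subst hnil
    have : (0 : Zsqrtd (-d)) = ε * 2 := h2
    rcases hε with rfl | rfl <;> simp [Zsqrtd.ext_iff] at this
  | succ n ih =>
    intro l hl hstd ε hε h
    obtain ⟨h1, h2⟩ := h
    match l with
    | [] =>
      have : (0 : Zsqrtd (-d)) = ε * 2 := h2
      rcases hε with rfl | rfl <;> simp [Zsqrtd.ext_iff] at this
    | [q] =>
      have e : (Gm ([q] : List (Zsqrtd (-d)))).1.2 = 1 := by simp [Gm]
      rw [e] at h2
      rcases hε with rfl | rfl <;> simp [Zsqrtd.ext_iff] at h2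
    | [a, b] =>
      have e1 : (Gm ([a, b] : List (Zsqrtd (-d)))).1.1 = a * b + 1 := by simp [Gm]
      have e2 : (Gm ([a, b] : List (Zsqrtd (-d)))).1.2 = a := by simp [Gm]
      rw [e1] at h1
      rw [e2] at h2
      subst h2
      rcases hε with rfl | rfl
      · rw [one_mul] at h1
        have him := congrArg Zsqrtd.im h1
        simp [Zsqrtd.im_mul, Zsqrtd.re_mul, aa] at him
        omega
      · have him := congrArg Zsqrtd.im h1
        simp [Zsqrtd.im_mul, Zsqrtd.re_mul, aa] at him
        omega
    | a :: b :: c :: r =>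
      have hb : Big b := (abl_cons_cons.mp hstd).1
      have hrest : ABL (c :: r) := (abl_cons_cons.mp hstd).2
      rcases small_or_big a with rfl | rfl | rfl | ha
      · -- head 0
        have e1 : (Gm ((0:Zsqrtd (-d)) :: b :: c :: r)).1.1 = (Gm (c :: r)).1.1 := by
          rw [gm_11_cons, gm_21_cons]; ring
        have e2 : (Gm ((0:Zsqrtd (-d)) :: b :: c :: r)).1.2 = (Gm (c :: r)).1.2 := by
          rw [gm_12_cons, gm_22_cons]; ring
        rw [e1] at h1; rw [e2] at h2
        exact ih (c :: r) (by simp at hl ⊢; omega) (abl_tail hrest) ε hε ⟨h1, h2⟩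
      · -- head 1
        have e1 : (Gm ((1:Zsqrtd (-d)) :: b :: c :: r)).1.1 = (Gm ((b+1) :: c :: r)).1.1 := by
          simp only [gm_11_cons, gm_21_cons]; ring
        have e2 : (Gm ((1:Zsqrtd (-d)) :: b :: c :: r)).1.2 = (Gm ((b+1) :: c :: r)).1.2 := by
          simp only [gm_12_cons, gm_22_cons]; ring
        rw [e1] at h1; rw [e2] at h2
        exact ih ((b+1) :: c :: r) (by simp at hl ⊢; omega) hrest ε hε ⟨h1, h2⟩
      · -- head -1
        have e1 : (Gm ((-1:Zsqrtd (-d)) :: b :: c :: r)).1.1 = -((Gm ((b-1) :: c :: r)).1.1) := by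
          simp only [gm_11_cons, gm_21_cons]; ring
        have e2 : (Gm ((-1:Zsqrtd (-d)) :: b :: c :: r)).1.2 = -((Gm ((b-1) :: c :: r)).1.2) := by
          simp only [gm_12_cons, gm_22_cons]; ring
        rw [e1] at h1; rw [e2] at h2
        refine ih ((b-1) :: c :: r) (by simp at hl ⊢; omega) hrest (-ε) hε.neg ⟨?_, ?_⟩
        · rw [neg_mul, ← h1, neg_neg]
        · rw [neg_mul, ← h2, neg_neg]
      · -- head big : growth contradiction
        have habll : ABL (a :: b :: c :: r) := abl_cons_cons.mpr ⟨ha, hstd⟩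
        obtain ⟨g1, _⟩ := growth f hf (b :: c :: r) a (List.cons_ne_nil _ _) habll
        obtain ⟨g2, g3⟩ := growth f hf (c :: r) b (List.cons_ne_nil _ _) hstd
        have h3 : 3 ≤ ‖f (Gm (a :: b :: c :: r)).1.2‖ := by linarith
        rw [h2] at h3
        have habs2 : ‖f (ε * 2)‖ = 2 := by
          rcases hε with rfl | rfl <;>
            simp [map_mul, map_ofNat]
        rw [habs2] at h3
        linarith

lemma gm_append (l : List (Zsqrtd (-d))) (q : Zsqrtd (-d)) :
    (Gm (l ++ [q])).1.1 = q * (Gm l).1.1 + (Gm l).1.2 ∧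
    (Gm (l ++ [q])).1.2 = (Gm l).1.1 ∧
    (Gm (l ++ [q])).2.1 = q * (Gm l).2.1 + (Gm l).2.2 ∧
    (Gm (l ++ [q])).2.2 = (Gm l).2.1 := by
  induction l with
  | nil => refine ⟨?_, ?_, ?_, ?_⟩ <;> simp [Gm]
  | cons x l ih =>
    obtain ⟨i1, i2, i3, i4⟩ := ih
    refine ⟨?_, ?_, ?_, ?_⟩ <;>
      simp only [List.cons_append, gm_11_cons, gm_12_cons, gm_21_cons, gm_22_cons,
        i1, i2, i3, i4] <;> ring

lemma eq_pm_one (hd : 4 ≤ d) {a x : Zsqrtd (-d)} (h : a * x = 1) : Sgn a := by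
  have hnorm : a.norm * x.norm = 1 := by rw [← Zsqrtd.norm_mul, h, Zsqrtd.norm_one]
  have hndef : a.norm = a.re * a.re + d * (a.im * a.im) := by rw [Zsqrtd.norm_def]; ring
  have h1 : a.norm = 1 := by
    rcases Int.mul_eq_one_iff_eq_one_or_neg_one.mp hnorm with ⟨h1, _⟩ | ⟨h1, _⟩
    · exact h1
    · exfalso
      rw [hndef] at h1
      nlinarith [mul_self_nonneg a.re, mul_self_nonneg a.im]
  rw [hndef] at h1
  have him : a.im = 0 := by
    by_contra him
    have h2 : 1 ≤ a.im * a.im := by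
      rcases lt_or_gt_of_ne him with h' | h' <;> nlinarith
    nlinarith [mul_self_nonneg a.re]
  rw [him] at h1
  simp at h1
  rcases mul_self_eq_one_iff.mp h1 with hre | hre
  · left; rw [Zsqrtd.ext_iff]; simp [hre, him]
  · right; rw [Zsqrtd.ext_iff]; simp [hre, him]

lemma um_step {a b q : Zsqrtd (-d)} (h : Um a b) : Um b (a - b * q) := by
  obtain ⟨x, y, hxy⟩ := h
  exact ⟨y + q * x, x, by linear_combination hxy⟩

lemma chain_col (hd : 4 ≤ d) : ∀ (l : List (Zsqrtd (-d))) (a b : Zsqrtd (-d)),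
    Chn a b l → Um a b →
    ∃ t : Zsqrtd (-d), Sgn t ∧ a = t * (Gm l.reverse).1.1 ∧ b = t * (Gm l.reverse).1.2 := by
  intro l
  induction l with
  | nil =>
    intro a b hch hum
    have hb : b = 0 := hch
    subst hb
    obtain ⟨x, y, hxy⟩ := hum
    rw [zero_mul, add_zero] at hxy
    exact ⟨a, eq_pm_one hd hxy, by simp [Gm], by simp [Gm]⟩
  | cons q l ih =>
    intro a b hch hum
    have hch' : Chn b (a - b * q) l := hch
    obtain ⟨t, ht, h1, h2⟩ := ih b (a - b * q) hch' (um_step hum)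
    obtain ⟨e1, e2, _, _⟩ := gm_append l.reverse q
    rw [List.reverse_cons]
    refine ⟨t, ht, ?_, ?_⟩
    · rw [e1]
      linear_combination h2 + q * h1
    · rw [e2]; exact h1

end NotSemiEuclid

open NotSemiEuclid

/-- For every integer `d ≥ 4`, `ℤ[√−d]` is not semi-Euclidean: there is no
stathm `Φ` into a linearly ordered set with well-founded strict order satisfying the
semi-Euclidean division property for coprime pairs. -/
theorem zsqrtd_not_semiEuclidean (d : ℤ) (hd : 4 ≤ d) :
    ¬ ∃ (W : Type) (_ : LinearOrder W)
        (_ : WellFounded ((· < ·) : W → W → Prop)) (Φ : Zsqrtd (-d) → W),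
      ∀ a b : Zsqrtd (-d), b ≠ 0 → (∃ x y : Zsqrtd (-d), a * x + b * y = 1) →
        ∃ q : Zsqrtd (-d), Φ (a - b * q) < Φ b := by
  rintro ⟨W, instW, hwf, Φ, hΦ⟩
  have hd0 : (0:ℝ) ≤ (d:ℝ) := by
    have : (0:ℤ) ≤ d := by linarith
    exact_mod_cast this
  -- the complex embedding
  have hr : (↑(Real.sqrt d) * Complex.I) * (↑(Real.sqrt d) * Complex.I) = ((-d : ℤ) : ℂ) := by
    have hs : (Real.sqrt d : ℂ) * (Real.sqrt d : ℂ) = ((d:ℝ) : ℂ) := by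
      rw [← Complex.ofReal_mul, Real.mul_self_sqrt hd0]
    rw [mul_mul_mul_comm, Complex.I_mul_I, hs]
    push_cast
    ring
  set f : Zsqrtd (-d) →+* ℂ := Zsqrtd.lift ⟨_, hr⟩ with hf_def
  have habs : ∀ x : Zsqrtd (-d),
      ‖f x‖ = Real.sqrt ((x.re:ℝ)^2 + d * (x.im:ℝ)^2) := by
    intro x
    have hfval : f x = (x.re : ℂ) + (x.im : ℂ) * (↑(Real.sqrt d) * Complex.I) := by
      rw [hf_def]; simp [Zsqrtd.lift]
    have hform : f x = ((x.re : ℝ) : ℂ) + ((x.im * Real.sqrt d : ℝ) : ℂ) * Complex.I := by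
      rw [hfval]; push_cast; ring
    rw [hform, Complex.norm_def, Complex.normSq_add_mul_I]
    congr 1
    have : Real.sqrt d * Real.sqrt d = (d:ℝ) := Real.mul_self_sqrt hd0
    push_cast
    nlinarith [this]
  have hf : ∀ q : Zsqrtd (-d), Big q → 2 ≤ ‖f q‖ := by
    intro q hq
    rw [habs]
    have h4 : (4:ℝ) ≤ (q.re:ℝ)^2 + d * (q.im:ℝ)^2 := by
      have h4' : (4:ℤ) ≤ q.re^2 + d * q.im^2 := by
        obtain ⟨h0, h1, h2⟩ := hq
        rcases eq_or_ne q.im 0 with him | him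
        · have h0' : q.re ≠ 0 := fun h => h0 (by rw [Zsqrtd.ext_iff]; simp [h, him])
          have h1' : q.re ≠ 1 := fun h => h1 (by rw [Zsqrtd.ext_iff]; simp [h, him])
          have h2' : q.re ≠ -1 := fun h => h2 (by rw [Zsqrtd.ext_iff]; simp [h, him])
          have : q.re ≤ -2 ∨ 2 ≤ q.re := by omega
          rcases this with h' | h' <;> nlinarith [sq_nonneg q.im]
        · have h5 : 1 ≤ q.im^2 := by
            rcases lt_or_gt_of_ne him with h' | h' <;> nlinarith
          nlinarith [sq_nonneg q.re]
      exact_mod_cast h4'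
    rw [show (2:ℝ) = Real.sqrt 4 by
      rw [show (4:ℝ) = 2^2 by norm_num, Real.sqrt_sq (by norm_num)]]
    exact Real.sqrt_le_sqrt h4
  -- the starting unimodular pair
  have hK : ∃ k : ℤ, d * d + 3 * d = 2 * k := by
    rcases Int.even_or_odd d with ⟨m, hm⟩ | ⟨m, hm⟩
    · exact ⟨m * (d + 3), by rw [hm]; ring⟩
    · exact ⟨d * (m + 2), by rw [hm]; ring⟩
  obtain ⟨k, hk⟩ := hK
  have hum : Um (aa : Zsqrtd (-d)) 2 := by
    refine ⟨⟨d + 1, -1⟩, ((-k : ℤ) : Zsqrtd (-d)), ?_⟩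
    rw [Zsqrtd.ext_iff]
    constructor
    · simp [aa, Zsqrtd.re_mul, Zsqrtd.im_mul]
      linear_combination hk
    · simp [aa, Zsqrtd.re_mul, Zsqrtd.im_mul]
  -- existence of a terminating division chain, by well-founded descent
  have wfR : WellFounded (fun x y : Zsqrtd (-d) => Φ x < Φ y) := InvImage.wf Φ hwf
  have key : ∀ b a : Zsqrtd (-d), Um a b → ∃ l, Chn a b l := by
    intro b
    refine wfR.induction (C := fun b => ∀ a, Um a b → ∃ l, Chn a b l) b ?_
    intro b' ihb a hum'
    by_cases hb : b' = 0
    · subst hb; exact ⟨[], rfl⟩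
    · obtain ⟨q, hq⟩ := hΦ a b' hb hum'
      obtain ⟨l, hl⟩ := ihb (a - b' * q) hq b' (um_step hum')
      exact ⟨q :: l, hl⟩
  obtain ⟨l, hl⟩ := key 2 aa hum
  obtain ⟨t, ht, h1, h2⟩ := chain_col hd l aa 2 hl hum
  obtain ⟨l', s, t', hs, ht', hstd, _, _, hrel⟩ := phaseN l.reverse.length l.reverse le_rfl
  obtain ⟨r1, r2, -, -⟩ := hrel
  have hsq : (t * s) * (t * s) = 1 := (ht.mul hs).sq
  refine lemmaM f hf l'.length l' le_rfl hstd (t * s) (ht.mul hs) ⟨?_, ?_⟩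
  · have haa : aa = (t * s) * (Gm l').1.1 := by rw [h1, r1]; ring
    rw [haa, ← mul_assoc, hsq, one_mul]
  · have h2' : (2 : Zsqrtd (-d)) = (t * s) * (Gm l').1.2 := by rw [h2, r2]; ring
    rw [h2', ← mul_assoc, hsq, one_mul]
end

section
/- Closed unit disks centered at the points of ℤ[√−3] cover the complex plane: for every z ∈ ℂ there exist integers a, b such that |z − (a + b·√3·i)| ≤ 1. -/
/-- Closed unit disks centered at the points of the lattice
`{a + b·√3·i : a, b ∈ ℤ}` (the embedding of `ℤ[√−3]` in `ℂ`) cover the complex plane. -/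
theorem unit_disks_cover_zsqrtd_neg_three (z : ℂ) :
    ∃ a b : ℤ, ‖z - ((a : ℂ) + (b : ℂ) * (Real.sqrt 3 * Complex.I))‖ ≤ 1 := by
  set s := Real.sqrt 3 with hs
  have hsq : s ^ 2 = 3 := Real.sq_sqrt (by norm_num)
  have hspos : (0:ℝ) < s := Real.sqrt_pos.mpr (by norm_num)
  refine ⟨round z.re, round (z.im / s), ?_⟩
  set a := round z.re
  set b := round (z.im / s)
  have ha : |z.re - (a:ℝ)| ≤ 1/2 := abs_sub_round z.re
  have hb' : |z.im / s - (b:ℝ)| ≤ 1/2 := abs_sub_round _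
  have hb : |z.im - (b:ℝ) * s| ≤ s / 2 := by
    have : z.im - (b:ℝ) * s = (z.im / s - (b:ℝ)) * s := by
      field_simp
    rw [this, abs_mul, abs_of_pos hspos]
    have := mul_le_mul_of_nonneg_right hb' hspos.le
    linarith
  have ha2 : (z.re - (a:ℝ))^2 ≤ (1/2)^2 := by
    have := sq_abs (z.re - (a:ℝ))
    nlinarith [abs_nonneg (z.re - (a:ℝ))]
  have hb2 : (z.im - (b:ℝ) * s)^2 ≤ 3/4 := by
    have h1 := sq_abs (z.im - (b:ℝ) * s)
    nlinarith [abs_nonneg (z.im - (b:ℝ) * s)]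
  set w := z - ((a : ℂ) + (b : ℂ) * (s * Complex.I)) with hw
  have hre : w.re = z.re - (a:ℝ) := by simp [hw]
  have him : w.im = z.im - (b:ℝ) * s := by simp [hw]
  have hsq1 : ‖w‖ ^ 2 ≤ 1 := by
    rw [Complex.sq_norm, Complex.normSq_apply, hre, him]
    nlinarith
  nlinarith [norm_nonneg w]
end

section
/- If z ∈ ℂ has distance at least 1 from every point of the lattice ℤ[√−3] (i.e., |z − (a + b·√3·i)| ≥ 1 for all integers a, b), then z is a translate of (1 + √3·i)/2 by a lattice point: there exist integers a, b with z = (1 + √3·i)/2 + a + b·√3·i. -/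
lemma deep_holes_aux (u v : ℝ) (hu : |u| ≤ 1/2) (hv : |v| ≤ Real.sqrt 3 / 2)
    (habs : 1 ≤ u^2 + v^2) :
    (u = 1/2 ∨ u = -(1/2)) ∧ (v = Real.sqrt 3 / 2 ∨ v = -(Real.sqrt 3 / 2)) := by
  have h3 : (0:ℝ) < Real.sqrt 3 := Real.sqrt_pos.mpr (by norm_num)
  have hsq : Real.sqrt 3 ^ 2 = 3 := Real.sq_sqrt (by norm_num)
  obtain ⟨h1, h2⟩ := abs_le.mp hu
  obtain ⟨h3', h4⟩ := abs_le.mp hv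
  have hu2 : u^2 ≤ 1/4 := by nlinarith
  have hv2 : v^2 ≤ 3/4 := by nlinarith
  have hu2' : u^2 = 1/4 := by linarith
  have hv2' : v^2 = 3/4 := by linarith
  constructor
  · have : (u - 1/2) * (u + 1/2) = 0 := by nlinarith
    rcases mul_eq_zero.mp this with h | h
    · exact Or.inl (by linarith)
    · exact Or.inr (by linarith)
  · have : (v - Real.sqrt 3 / 2) * (v + Real.sqrt 3 / 2) = 0 := by nlinarith
    rcases mul_eq_zero.mp this with h | h
    · exact Or.inl (by linarith)
    · exact Or.inr (by linarith)

/-- A point of `ℂ` at distance at least 1 from every point of the lattice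
`{a + b·√3·i : a, b ∈ ℤ}` is a lattice translate of the deep hole `(1 + √3·i)/2`. -/
theorem deep_holes_zsqrtd_neg_three (z : ℂ)
    (hz : ∀ a b : ℤ, 1 ≤ ‖z - ((a : ℂ) + (b : ℂ) * (Real.sqrt 3 * Complex.I))‖) :
    ∃ a b : ℤ, z = (1 + Real.sqrt 3 * Complex.I) / 2 + (a : ℂ) + (b : ℂ) * (Real.sqrt 3 * Complex.I) := by
  have h3 : (0:ℝ) < Real.sqrt 3 := Real.sqrt_pos.mpr (by norm_num)
  have hsq : Real.sqrt 3 ^ 2 = 3 := Real.sq_sqrt (by norm_num)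
  obtain ⟨x, y⟩ := z
  simp only [Complex.ext_iff] at *
  set a0 : ℤ := round x with ha0
  set b0 : ℤ := round (y / Real.sqrt 3) with hb0
  have hu : |x - (a0:ℝ)| ≤ 1/2 := abs_sub_round x
  have hv : |y - (b0:ℝ) * Real.sqrt 3| ≤ Real.sqrt 3 / 2 := by
    have h1 : |y / Real.sqrt 3 - (b0:ℝ)| ≤ 1/2 := abs_sub_round _
    have h2 : y - (b0:ℝ) * Real.sqrt 3 = Real.sqrt 3 * (y / Real.sqrt 3 - (b0:ℝ)) := by
      field_simp
    rw [h2, abs_mul, abs_of_pos h3]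
    nlinarith [abs_nonneg (y / Real.sqrt 3 - (b0:ℝ))]
  have key := hz a0 b0
  have habs : 1 ≤ (x - (a0:ℝ))^2 + (y - (b0:ℝ) * Real.sqrt 3)^2 := by
    have hsqabs : ‖Complex.mk x y - ((a0 : ℂ) + (b0 : ℂ) * (Real.sqrt 3 * Complex.I))‖^2
        = (x - (a0:ℝ))^2 + (y - (b0:ℝ) * Real.sqrt 3)^2 := by
      rw [Complex.sq_norm, Complex.normSq_apply]
      simp [Complex.sub_re, Complex.sub_im, Complex.add_re, Complex.add_im,
        Complex.mul_re, Complex.mul_im]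
      ring
    nlinarith [norm_nonneg (Complex.mk x y - ((a0 : ℂ) + (b0 : ℂ) * (Real.sqrt 3 * Complex.I)))]
  obtain ⟨hucases, hvcases⟩ := deep_holes_aux _ _ hu hv habs
  obtain ⟨a, hxa⟩ : ∃ a : ℤ, x = 1/2 + (a:ℝ) := by
    rcases hucases with h | h
    · exact ⟨a0, by linarith⟩
    · exact ⟨a0 - 1, by push_cast; linarith⟩
  obtain ⟨b, hyb⟩ : ∃ b : ℤ, y = Real.sqrt 3 / 2 + (b:ℝ) * Real.sqrt 3 := by
    rcases hvcases with h | h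
    · exact ⟨b0, by linarith⟩
    · exact ⟨b0 - 1, by push_cast; linarith⟩
  refine ⟨a, b, ?_, ?_⟩
  · simp [Complex.div_re, Complex.normSq]
    rw [hxa]; ring
  · simp [Complex.div_im, Complex.normSq]
    rw [hyb]
end

section
/- The ring of Lipschitz quaternions ℤ ⊕ ℤi ⊕ ℤj ⊕ ℤij (integer quaternions with i² = j² = −1, ij = −ji) is semi-Euclidean with the quaternion norm as stathm: for all Lipschitz quaternions a, b with b ≠ 0, if there exist Lipschitz quaternions x, y with a·x + b·y = 1, then there exists a Lipschitz quaternion q such that normSq(a − b·q) < normSq(b), where normSq(w + xi + yj + zij) = w² + x² + y² + z². -/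
open Quaternion

private lemma round_lemma (c n : ℤ) (hn : 0 < n) :
    ∃ q : ℤ, -n ≤ 2*(c - n*q) ∧ 2*(c - n*q) < n := by
  refine ⟨(2*c + n) / (2*n), ?_, ?_⟩ <;>
  · have h2 := Int.emod_nonneg (2*c+n) (by positivity : (2*n) ≠ 0)
    have h3 := Int.emod_lt_of_pos (2*c+n) (by positivity : 0 < 2*n)
    have h4 := Int.mul_ediv_add_emod (2*c+n) (2*n)
    nlinarith [h4]

private lemma ineq_lemma (n N t0 t1 t2 t3 : ℤ) (hn : 0 < n)
    (h : n * N = t0^2 + t1^2 + t2^2 + t3^2)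
    (b0 : (2*t0)^2 ≤ n^2) (b1 : (2*t1)^2 ≤ n^2) (b2 : (2*t2)^2 ≤ n^2) (b3 : (2*t3)^2 ≤ n^2)
    (hs : (2*t0)^2 < n^2 ∨ (2*t1)^2 < n^2 ∨ (2*t2)^2 < n^2 ∨ (2*t3)^2 < n^2) :
    N < n := by
  have h4 : 4 * (n * N) < 4 * n^2 := by rcases hs with h'|h'|h'|h' <;> nlinarith
  nlinarith

private lemma half_lemma (n t : ℤ) (hl : -n ≤ 2*t) (hr : 2*t < n) (hs : n^2 ≤ (2*t)^2) :
    2*t = -n := by nlinarith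

private lemma odd_sq_lemma (m : ℤ) : ∃ k, (2*m - 1)^2 = 8*k + 1 := by
  obtain ⟨k, hk⟩ := Int.even_mul_succ_self (m - 1)
  exact ⟨k, by nlinarith [hk]⟩

private lemma even_lemma (n' k S : ℤ) (h : 2*n'*(8*k+4) = 4*S) : S = 2*(n'*(2*k+1)) := by
  linarith

private lemma parity_lemma (P u0 Q : ℤ) : 2*P ≠ 1 - 2*u0 + 2*Q := by omega

/-- The Lipschitz quaternions `ℤ ⊕ ℤi ⊕ ℤj ⊕ ℤij` are semi-Euclidean
with the quaternion norm as stathm. -/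
theorem lipschitz_quaternions_semiEuclidean
    (a b : Quaternion ℤ) (hb : b ≠ 0)
    (hcop : ∃ x y : Quaternion ℤ, a * x + b * y = 1) :
    ∃ q : Quaternion ℤ, Quaternion.normSq (a - b * q) < Quaternion.normSq b := by
  obtain ⟨n, hn_def⟩ : ∃ n : ℤ, normSq b = n := ⟨_, rfl⟩
  have hn : 0 < n := hn_def ▸ lt_of_le_of_ne (normSq_nonneg) (Ne.symm (normSq_ne_zero.2 hb))
  obtain ⟨c0, hc0⟩ : ∃ z : ℤ, (star b * a).re = z := ⟨_, rfl⟩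
  obtain ⟨c1, hc1⟩ : ∃ z : ℤ, (star b * a).imI = z := ⟨_, rfl⟩
  obtain ⟨c2, hc2⟩ : ∃ z : ℤ, (star b * a).imJ = z := ⟨_, rfl⟩
  obtain ⟨c3, hc3⟩ : ∃ z : ℤ, (star b * a).imK = z := ⟨_, rfl⟩
  obtain ⟨q0, h0l, h0r⟩ := round_lemma c0 n hn
  obtain ⟨q1, h1l, h1r⟩ := round_lemma c1 n hn
  obtain ⟨q2, h2l, h2r⟩ := round_lemma c2 n hn
  obtain ⟨q3, h3l, h3r⟩ := round_lemma c3 n hn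
  set q : Quaternion ℤ := ⟨q0, q1, q2, q3⟩ with hq_def
  have key : star b * (a - b * q) = star b * a - n • q := by
    rw [mul_sub, ← mul_assoc, star_mul_self, Quaternion.coe_mul_eq_smul, hn_def]
  obtain ⟨N, hN_def⟩ : ∃ N : ℤ, normSq (a - b * q) = N := ⟨_, rfl⟩
  have ht : normSq (star b * (a - b * q)) = n * N := by
    rw [map_mul, normSq_star, hn_def, hN_def]
  have hNt : n * N = (c0 - n*q0)^2 + (c1 - n*q1)^2 + (c2 - n*q2)^2 + (c3 - n*q3)^2 := by
    rw [← ht, normSq_def', key]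
    simp [hc0, hc1, hc2, hc3, smul_eq_mul]
    simp [hq_def]
  have sqb : ∀ t : ℤ, -n ≤ 2*t → 2*t < n → (2*t)^2 ≤ n^2 := by
    intro t hl hr; nlinarith
  by_cases hstrict : (2*(c0 - n*q0))^2 < n^2 ∨ (2*(c1 - n*q1))^2 < n^2 ∨
      (2*(c2 - n*q2))^2 < n^2 ∨ (2*(c3 - n*q3))^2 < n^2
  · refine ⟨q, ?_⟩
    rw [hN_def, hn_def]
    exact ineq_lemma n N _ _ _ _ hn hNt (sqb _ h0l h0r) (sqb _ h1l h1r)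
      (sqb _ h2l h2r) (sqb _ h3l h3r) hstrict
  · exfalso
    push_neg at hstrict
    obtain ⟨s0, s1, s2, s3⟩ := hstrict
    have b0 := half_lemma n _ h0l h0r s0
    have b1 := half_lemma n _ h1l h1r s1
    have b2 := half_lemma n _ h2l h2r s2
    have b3 := half_lemma n _ h3l h3r s3
    obtain ⟨n', hn'⟩ : ∃ n', n = 2 * n' := ⟨-(c0 - n*q0), by omega⟩
    set m : Quaternion ℤ := ⟨2*q0 - 1, 2*q1 - 1, 2*q2 - 1, 2*q3 - 1⟩ with hm_def
    have hbm : b * m = a + a := by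
      have hz : star b * (b * m - (a + a)) = 0 := by
        have expand : star b * (b * m - (a + a)) =
            n • m - (star b * a + star b * a) := by
          rw [mul_sub, mul_add, ← mul_assoc, star_mul_self, Quaternion.coe_mul_eq_smul, hn_def]
        rw [expand]
        ext <;>
          simp [hc0, hc1, hc2, hc3, smul_eq_mul] <;>
          simp [hm_def] <;>
          linarith [b0, b1, b2, b3]
      have hsb : star b ≠ 0 := by simpa using hb
      have h0 := (mul_eq_zero.mp hz).resolve_left hsb
      rw [sub_eq_zero] at h0
      exact h0
    -- norm of m
    obtain ⟨k0, hk0⟩ := odd_sq_lemma q0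
    obtain ⟨k1, hk1⟩ := odd_sq_lemma q1
    obtain ⟨k2, hk2⟩ := odd_sq_lemma q2
    obtain ⟨k3, hk3⟩ := odd_sq_lemma q3
    have hM : normSq m = 8*(k0+k1+k2+k3) + 4 := by
      rw [normSq_def', hm_def]
      dsimp only
      rw [hk0, hk1, hk2, hk3]; ring
    obtain ⟨a0, ha0⟩ : ∃ z : ℤ, a.re = z := ⟨_, rfl⟩
    obtain ⟨a1, ha1⟩ : ∃ z : ℤ, a.imI = z := ⟨_, rfl⟩
    obtain ⟨a2, ha2⟩ : ∃ z : ℤ, a.imJ = z := ⟨_, rfl⟩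
    obtain ⟨a3, ha3⟩ : ∃ z : ℤ, a.imK = z := ⟨_, rfl⟩
    have hA_def : normSq a = a0^2 + a1^2 + a2^2 + a3^2 := by
      rw [normSq_def', ha0, ha1, ha2, ha3]
    have h4A : n * (8*(k0+k1+k2+k3) + 4) = 4 * (a0^2 + a1^2 + a2^2 + a3^2) := by
      have h1 : normSq (b * m) = normSq (a + a) := by rw [hbm]
      rw [map_mul, hn_def, hM] at h1
      rw [h1, normSq_def']
      simp only [Quaternion.re_add, Quaternion.imI_add, Quaternion.imJ_add, Quaternion.imK_add,
        ha0, ha1, ha2, ha3]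
      ring
    have hAeven : a0^2 + a1^2 + a2^2 + a3^2 = 2 * (n' * (2*(k0+k1+k2+k3)+1)) := by
      rw [hn'] at h4A
      exact even_lemma _ _ _ h4A
    -- coprimality gives N(a) * N(x) odd
    obtain ⟨x, y, hxy⟩ := hcop
    have hax : a * x = 1 - b * y := by rw [eq_sub_iff_add_eq]; exact hxy
    obtain ⟨u0, hu0⟩ : ∃ z : ℤ, (b * y).re = z := ⟨_, rfl⟩
    obtain ⟨u1, hu1⟩ : ∃ z : ℤ, (b * y).imI = z := ⟨_, rfl⟩
    obtain ⟨u2, hu2⟩ : ∃ z : ℤ, (b * y).imJ = z := ⟨_, rfl⟩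
    obtain ⟨u3, hu3⟩ : ∃ z : ℤ, (b * y).imK = z := ⟨_, rfl⟩
    obtain ⟨Y, hY_def⟩ : ∃ Y : ℤ, normSq y = Y := ⟨_, rfl⟩
    obtain ⟨X, hX_def⟩ : ∃ X : ℤ, normSq x = X := ⟨_, rfl⟩
    have hu : u0^2 + u1^2 + u2^2 + u3^2 = n * Y := by
      have : normSq (b * y) = n * Y := by rw [map_mul, hn_def, hY_def]
      rw [← this, normSq_def', hu0, hu1, hu2, hu3]
    have hodd : (a0^2 + a1^2 + a2^2 + a3^2) * X = 1 - 2*u0 + n * Y := by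
      have h1 : normSq (a * x) = normSq (1 - b * y) := by rw [hax]
      rw [map_mul, hA_def, hX_def] at h1
      rw [h1, normSq_def']
      simp only [Quaternion.re_sub, Quaternion.imI_sub, Quaternion.imJ_sub, Quaternion.imK_sub,
        Quaternion.re_one, Quaternion.imI_one, Quaternion.imJ_one, Quaternion.imK_one,
        hu0, hu1, hu2, hu3]
      linear_combination hu
    rw [hn', hAeven] at hodd
    exact parity_lemma (n'*(2*(k0+k1+k2+k3)+1)*X) u0 (n'*Y) (by linarith [hodd])
end

section
/- If a real quaternion x ∈ ℍ has distance at least 1 from every Lipschitz quaternion (i.e., ‖x − q‖ ≥ 1 for every quaternion q with all four components in ℤ), then x is a translate of (1 + i + j + ij)/2 by a Lipschitz quaternion: there exists a Lipschitz quaternion q with x = (1 + i + j + ij)/2 + q. -/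
lemma half_of_sq (t : ℝ) (n : ℤ) (h : (t - n)^2 = 1/4) : ∃ a : ℤ, t = 1/2 + a := by
  have habs : |t - (n : ℝ)| = 1/2 := by nlinarith [abs_nonneg (t - (n:ℝ)), sq_abs (t - (n:ℝ))]
  rcases (abs_eq (by norm_num : (0:ℝ) ≤ 1/2)).1 habs with h' | h'
  · exact ⟨n, by linarith⟩
  · exact ⟨n - 1, by push_cast; linarith⟩

/-- A real quaternion at distance at least 1 from every Lipschitz
quaternion is a Lipschitz translate of the deep hole `(1 + i + j + ij)/2`. -/
theorem deep_holes_lipschitz (x : Quaternion ℝ)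
    (hx : ∀ a b c d : ℤ,
      1 ≤ ‖x - (show Quaternion ℝ from ⟨(a : ℝ), (b : ℝ), (c : ℝ), (d : ℝ)⟩)‖) :
    ∃ a b c d : ℤ,
      x = (show Quaternion ℝ from ⟨(1 : ℝ)/2, 1/2, 1/2, 1/2⟩)
          + (show Quaternion ℝ from ⟨(a : ℝ), (b : ℝ), (c : ℝ), (d : ℝ)⟩) := by
  set q : Quaternion ℝ := ⟨(round x.re : ℝ), (round x.imI : ℝ), (round x.imJ : ℝ), (round x.imK : ℝ)⟩
  have h1 := hx (round x.re) (round x.imI) (round x.imJ) (round x.imK)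
  have hns : Quaternion.normSq (x - q) =
      (x.re - round x.re)^2 + (x.imI - round x.imI)^2 + (x.imJ - round x.imJ)^2
      + (x.imK - round x.imK)^2 := by
    simp only [Quaternion.normSq_def', Quaternion.re_sub, Quaternion.imI_sub,
      Quaternion.imJ_sub, Quaternion.imK_sub, q]
    rfl
  have hsum : 1 ≤ (x.re - round x.re)^2 + (x.imI - round x.imI)^2 + (x.imJ - round x.imJ)^2
      + (x.imK - round x.imK)^2 := by
    rw [← hns, Quaternion.normSq_eq_norm_mul_self]
    nlinarith [norm_nonneg (x - q)]
  have b1 := abs_sub_round x.re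
  have b2 := abs_sub_round x.imI
  have b3 := abs_sub_round x.imJ
  have b4 := abs_sub_round x.imK
  have s1 : (x.re - round x.re)^2 ≤ 1/4 := by nlinarith [sq_abs (x.re - (round x.re:ℝ)), abs_nonneg (x.re - (round x.re:ℝ))]
  have s2 : (x.imI - round x.imI)^2 ≤ 1/4 := by nlinarith [sq_abs (x.imI - (round x.imI:ℝ)), abs_nonneg (x.imI - (round x.imI:ℝ))]
  have s3 : (x.imJ - round x.imJ)^2 ≤ 1/4 := by nlinarith [sq_abs (x.imJ - (round x.imJ:ℝ)), abs_nonneg (x.imJ - (round x.imJ:ℝ))]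
  have s4 : (x.imK - round x.imK)^2 ≤ 1/4 := by nlinarith [sq_abs (x.imK - (round x.imK:ℝ)), abs_nonneg (x.imK - (round x.imK:ℝ))]
  obtain ⟨a, ha⟩ := half_of_sq x.re (round x.re) (by linarith)
  obtain ⟨b, hb⟩ := half_of_sq x.imI (round x.imI) (by linarith)
  obtain ⟨c, hc⟩ := half_of_sq x.imJ (round x.imJ) (by linarith)
  obtain ⟨d, hd⟩ := half_of_sq x.imK (round x.imK) (by linarith)
  exact ⟨a, b, c, d, by ext <;> simp [Quaternion.re_add, ha, hb, hc, hd] <;> rfl⟩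
end

section
/- Let n ≥ 2 and let z₁, z₂ be points of Euclidean space ℝⁿ such that ‖z₁ − z₂‖² is a positive integer. If p is a point lying on both unit spheres centered at z₁ and z₂ (i.e., ‖p − z₁‖ = 1 and ‖p − z₂‖ = 1), then the real inner product ⟪z₁ − p, z₂ − p⟫ equals (2 − ‖z₁ − z₂‖²)/2 and lies in the set {1/2, 0, −1/2, −1}. -/
/-- If `z₁, z₂ ∈ ℝⁿ` (`n ≥ 2`) have `‖z₁ − z₂‖²` a positive integer and
`p` lies on both unit spheres centered at `z₁` and `z₂`, then the inner product
`⟪z₁ − p, z₂ − p⟫` equals `(2 − ‖z₁ − z₂‖²)/2` and lies in `{1/2, 0, −1/2, −1}`. -/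
theorem dihedral_angle_lemma (n : ℕ) (hn : 2 ≤ n)
    (z₁ z₂ p : EuclideanSpace ℝ (Fin n))
    (hint : ∃ m : ℕ, 0 < m ∧ ‖z₁ - z₂‖ ^ 2 = (m : ℝ))
    (hp₁ : ‖p - z₁‖ = 1) (hp₂ : ‖p - z₂‖ = 1) :
    (inner ℝ (z₁ - p) (z₂ - p) : ℝ) = (2 - ‖z₁ - z₂‖ ^ 2) / 2 ∧
      (inner ℝ (z₁ - p) (z₂ - p) : ℝ) ∈ ({1/2, 0, -1/2, -1} : Set ℝ) := by
  obtain ⟨m, hm, hmeq⟩ := hint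
  have ha : ‖z₁ - p‖ = 1 := by rw [norm_sub_rev]; exact hp₁
  have hb : ‖z₂ - p‖ = 1 := by rw [norm_sub_rev]; exact hp₂
  have hab : z₁ - z₂ = (z₁ - p) - (z₂ - p) := by abel
  have hpol : ‖z₁ - z₂‖ ^ 2 =
      ‖z₁ - p‖ ^ 2 - 2 * inner ℝ (z₁ - p) (z₂ - p) + ‖z₂ - p‖ ^ 2 := by
    rw [hab]
    rw [@norm_sub_sq_real]
  rw [ha, hb] at hpol
  have hEq : (inner ℝ (z₁ - p) (z₂ - p) : ℝ) = (2 - ‖z₁ - z₂‖ ^ 2) / 2 := by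
    linarith
  refine ⟨hEq, ?_⟩
  have hle : ‖z₁ - z₂‖ ≤ 2 := by
    calc ‖z₁ - z₂‖ = ‖(z₁ - p) + (p - z₂)‖ := by rw [show z₁ - z₂ = (z₁ - p) + (p - z₂) by abel]
    _ ≤ ‖z₁ - p‖ + ‖p - z₂‖ := norm_add_le _ _
    _ = 2 := by rw [ha, hp₂]; norm_num
  have hmle : (m : ℝ) ≤ 4 := by
    rw [← hmeq]
    nlinarith [norm_nonneg (z₁ - z₂)]
  have hm4 : m ≤ 4 := by exact_mod_cast hmle
  rw [hEq, hmeq]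
  interval_cases m <;> norm_num
end

section
/- Let O be the ring ℤ ⊕ ℤi ⊕ ℤj ⊕ ℤij inside the rational quaternion algebra (−1,−2/ℚ) (so i² = −1, j² = −2, ij = −ji, and O consists of elements with all four coordinates in ℤ), equipped with the orthogonal involution ‡ given by (x + yi + zj + tij)‡ = x + yi + zj − tij. Then O is semi-‡-Euclidean with the norm as stathm: for all a, b ∈ O with b ≠ 0, if a·b‡ is fixed by ‡ (i.e., the ij-component of a·b‡ is zero) and there exist x, y ∈ O with a·x + b·y = 1, then there exists q ∈ O with q‡ = q (i.e., the ij-component of q is zero) such that nrm(a − b·q) < nrm(b), where nrm(x + yi + zj + tij) = x² + y² + 2z² + 2t² is the reduced norm. -/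
/-- The orthogonal involution `‡` on the order `ℤ ⊕ ℤi ⊕ ℤj ⊕ ℤij` of the quaternion
algebra `(−1,−2/ℚ)`, negating the `ij`-component. -/
def ddag (a : QuaternionAlgebra ℤ (-1) 0 (-2)) : QuaternionAlgebra ℤ (-1) 0 (-2) :=
  ⟨a.re, a.imI, a.imJ, -a.imK⟩

/-- The reduced norm on the order `ℤ ⊕ ℤi ⊕ ℤj ⊕ ℤij` of `(−1,−2/ℚ)`. -/
def nrm (a : QuaternionAlgebra ℤ (-1) 0 (-2)) : ℤ :=
  a.re ^ 2 + a.imI ^ 2 + 2 * a.imJ ^ 2 + 2 * a.imK ^ 2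

/-!
If `a b‡` is fixed by `‡` then `b̄ a` has no `ij`-component, so `b⁻¹ a = b̄ a / nrm b` lies in
`ℚ + ℚi + ℚj`.
Rounding its three coordinates gives `q ∈ ℤ + ℤi + ℤj` with
`nrm (b⁻¹ a - q) ≤ 1/4 + 1/4 + 2/4 = 1`, and equality forces the coordinates of `b̄ a` to be odd
multiples of `nrm b / 2`, so `nrm b` is even. Then `a - b q` and `b`, hence also `a`, have even
norm. But the elements of even norm form a proper two-sided ideal, since
`nrm (x + y) ≡ nrm x + nrm y mod 2`; it cannot contain both `a` and `b` when `a O + b O = O`.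
-/

open scoped Quaternion
open QuaternionAlgebra

theorem exists_abs_two_mul_sub_mul_le (c : ℤ) {N : ℤ} (hN : 0 < N) :
    ∃ q : ℤ, |2 * (c - N * q)| ≤ N := by
  refine ⟨(2 * c + N) / (2 * N), abs_le.mpr ?_⟩
  have h₀ := Int.emod_nonneg (2 * c + N) (by omega : 2 * N ≠ 0)
  have h₁ := Int.emod_lt_of_pos (2 * c + N) (by omega : 0 < 2 * N)
  have h₂ := Int.mul_ediv_add_emod (2 * c + N) (2 * N)
  constructor <;> linarith

variable {a b : ℍ[ℤ,-1,-2]}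

theorem nrm_eq_re_star_mul (a : ℍ[ℤ,-1,-2]) : nrm a = (star a * a).re := by
  simp only [nrm, re_mul, re_star, imI_star, imJ_star, imK_star]
  ring

theorem star_mul_self_eq_nrm (a : ℍ[ℤ,-1,-2]) : star a * a = (nrm a : ℍ[ℤ,-1,-2]) := by
  rw [nrm_eq_re_star_mul]
  exact star_mul_eq_coe a

theorem nrm_mul (a b : ℍ[ℤ,-1,-2]) : nrm (a * b) = nrm a * nrm b := by
  simp only [nrm, re_mul, imI_mul, imJ_mul, imK_mul]
  ring

theorem nrm_star (a : ℍ[ℤ,-1,-2]) : nrm (star a) = nrm a := by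
  simp [nrm]

theorem nrm_one : nrm (1 : ℍ[ℤ,-1,-2]) = 1 := rfl

theorem nrm_nonneg (a : ℍ[ℤ,-1,-2]) : 0 ≤ nrm a := by
  unfold nrm
  positivity

theorem nrm_pos (ha : a ≠ 0) : 0 < nrm a := by
  refine (nrm_nonneg a).lt_of_ne fun h ↦ ha ?_
  unfold nrm at h
  have := sq_nonneg a.re
  have := sq_nonneg a.imI
  have := sq_nonneg a.imJ
  have := sq_nonneg a.imK
  ext <;> simp only [re_zero, imI_zero, imJ_zero, imK_zero] <;>
    exact pow_eq_zero_iff two_ne_zero |>.mp (by omega)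

theorem nrm_add (a b : ℍ[ℤ,-1,-2]) : nrm (a + b) =
    nrm a + nrm b + 2 * (a.re * b.re + a.imI * b.imI + 2 * a.imJ * b.imJ + 2 * a.imK * b.imK) := by
  simp only [nrm, re_add, imI_add, imJ_add, imK_add]
  ring

theorem even_nrm_add (ha : Even (nrm a)) (hb : Even (nrm b)) : Even (nrm (a + b)) := by
  rw [nrm_add]
  exact (ha.add hb).add (even_two_mul _)

theorem even_nrm_mul (ha : Even (nrm a)) (x : ℍ[ℤ,-1,-2]) : Even (nrm (a * x)) := by
  rw [nrm_mul]
  exact ha.mul_right _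

theorem not_even_nrm_of_mul_add_mul_eq_one {x y : ℍ[ℤ,-1,-2]} (h : a * x + b * y = 1)
    (ha : Even (nrm a)) : ¬Even (nrm b) := fun hb ↦ by
  simpa [h, nrm_one] using even_nrm_add (even_nrm_mul ha x) (even_nrm_mul hb y)

theorem imK_star_mul_eq_imK_mul_ddag (a b : ℍ[ℤ,-1,-2]) : (star b * a).imK = (a * ddag b).imK := by
  simp only [ddag, imK_mul, re_star, imI_star, imJ_star, imK_star]
  ring

theorem nrm_mul_nrm_sub_mul (a b q : ℍ[ℤ,-1,-2]) :
    nrm b * nrm (a - b * q) = nrm (star b * a - nrm b * q) := by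
  rw [← nrm_star b, ← nrm_mul, mul_sub, ← mul_assoc, star_mul_self_eq_nrm, nrm_star]

theorem exists_nrm_sub_mul_lt_sq_or_even (c : ℍ[ℤ,-1,-2]) (hc : c.imK = 0) {N : ℤ} (hN : 0 < N) :
    ∃ q : ℍ[ℤ,-1,-2], q.imK = 0 ∧
      (nrm (c - N * q) < N ^ 2 ∨ nrm (c - N * q) = N ^ 2 ∧ Even N) := by
  obtain ⟨q₀, h₀⟩ := exists_abs_two_mul_sub_mul_le c.re hN
  obtain ⟨q₁, h₁⟩ := exists_abs_two_mul_sub_mul_le c.imI hN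
  obtain ⟨q₂, h₂⟩ := exists_abs_two_mul_sub_mul_le c.imJ hN
  refine ⟨⟨q₀, q₁, q₂, 0⟩, rfl, ?_⟩
  have key : 4 * nrm (c - N * ⟨q₀, q₁, q₂, 0⟩) = (2 * (c.re - N * q₀)) ^ 2 +
      (2 * (c.imI - N * q₁)) ^ 2 + 2 * (2 * (c.imJ - N * q₂)) ^ 2 := by
    simp only [nrm, re_sub, imI_sub, imJ_sub, imK_sub, re_mul, imI_mul, imJ_mul, imK_mul,
      re_intCast, imI_intCast, imJ_intCast, imK_intCast, Int.cast_id, hc]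
    ring
  have t₀ := sq_le_sq' (abs_le.mp h₀).1 (abs_le.mp h₀).2
  have t₁ := sq_le_sq' (abs_le.mp h₁).1 (abs_le.mp h₁).2
  have t₂ := sq_le_sq' (abs_le.mp h₂).1 (abs_le.mp h₂).2
  rcases (show nrm (c - N * ⟨q₀, q₁, q₂, 0⟩) ≤ N ^ 2 by linarith).lt_or_eq with hlt | heq
  · exact .inl hlt
  · refine .inr ⟨heq, (Int.even_pow' two_ne_zero).mp ⟨2 * (c.re - N * q₀) ^ 2, ?_⟩⟩
    linarith

theorem exists_nrm_sub_mul_lt_or_even (hb : b ≠ 0) (hfix : (star b * a).imK = 0) :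
    ∃ q : ℍ[ℤ,-1,-2], q.imK = 0 ∧
      (nrm (a - b * q) < nrm b ∨ nrm (a - b * q) = nrm b ∧ Even (nrm b)) := by
  have hN := nrm_pos hb
  obtain ⟨q, hq, h⟩ := exists_nrm_sub_mul_lt_sq_or_even _ hfix hN
  refine ⟨q, hq, ?_⟩
  rw [← nrm_mul_nrm_sub_mul, sq] at h
  rcases h with hlt | ⟨heq, heven⟩
  · exact .inl (lt_of_mul_lt_mul_left hlt hN.le)
  · exact .inr ⟨mul_left_cancel₀ hN.ne' heq, heven⟩

/-- the order `ℤ ⊕ ℤi ⊕ ℤj ⊕ ℤij ⊂ (−1,−2/ℚ)` is semi-‡-Euclidean with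
the reduced norm as stathm. -/
theorem order_semi_ddag_euclidean
    (a b : QuaternionAlgebra ℤ (-1) 0 (-2)) (hb : b ≠ 0)
    (hfix : (a * ddag b).imK = 0)
    (hcop : ∃ x y : QuaternionAlgebra ℤ (-1) 0 (-2), a * x + b * y = 1) :
    ∃ q : QuaternionAlgebra ℤ (-1) 0 (-2), q.imK = 0 ∧ nrm (a - b * q) < nrm b := by
  obtain ⟨x, y, hxy⟩ := hcop
  rw [← imK_star_mul_eq_imK_mul_ddag] at hfix
  obtain ⟨q, hq, hlt | ⟨heq, heven⟩⟩ := exists_nrm_sub_mul_lt_or_even hb hfix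
  · exact ⟨q, hq, hlt⟩
  · have ha : Even (nrm a) := by
      rw [← sub_add_cancel a (b * q)]
      exact even_nrm_add (heq ▸ heven) (even_nrm_mul heven q)
    exact absurd heven (not_even_nrm_of_mul_add_mul_eq_one hxy ha)
end

section
/- Closed unit balls centered at the points of the lattice ℤ × ℤ × √2·ℤ cover ℝ³: for every v ∈ ℝ³ there exist integers a, b, c such that ‖v − (a, b, √2·c)‖ ≤ 1. -/
/-! Rounding each coordinate to the nearest lattice point errs by at most half the spacing,
so the squared distance is at most `1/4 + 1/4 + 2/4 = 1`. -/

theorem exists_int_abs_sub_mul_le (x : ℝ) {t : ℝ} (ht : t ≠ 0) :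
    ∃ n : ℤ, |x - t * n| ≤ |t| / 2 := by
  refine ⟨round (x / t), ?_⟩
  calc |x - t * round (x / t)| = |t| * |x / t - round (x / t)| := by
        rw [← abs_mul, mul_sub, mul_div_cancel₀ x ht]
    _ ≤ |t| * (1 / 2) := by gcongr; exact abs_sub_round _
    _ = |t| / 2 := by ring

theorem exists_norm_sub_rectangular_lattice_le {ι : Type*} [Fintype ι]
    (v : EuclideanSpace ℝ ι) {s : ι → ℝ} (hs : ∀ i, s i ≠ 0) :
    ∃ n : ι → ℤ, ‖v - WithLp.toLp 2 (fun i ↦ s i * n i)‖ ≤ √(∑ i, s i ^ 2) / 2 := by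
  choose n hn using fun i ↦ exists_int_abs_sub_mul_le (v i) (hs i)
  refine ⟨n, ?_⟩
  rw [EuclideanSpace.norm_eq, show √(∑ i, s i ^ 2) / 2 = √(∑ i, (|s i| / 2) ^ 2) by
    simp_rw [div_pow, sq_abs, ← Finset.sum_div, Real.sqrt_div' _ (by norm_num : (0:ℝ) ≤ 2 ^ 2),
      Real.sqrt_sq (by norm_num : (0:ℝ) ≤ 2)]]
  gcongr with i
  simpa using hn i

/-- Closed unit balls centered at the points of the lattice
`ℤ × ℤ × √2·ℤ` cover `ℝ³`. -/
theorem unit_balls_cover_symmetric_lattice (v : EuclideanSpace ℝ (Fin 3)) :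
    ∃ a b c : ℤ,
      ‖v - (WithLp.equiv 2 (Fin 3 → ℝ)).symm ![(a : ℝ), (b : ℝ), Real.sqrt 2 * (c : ℝ)]‖ ≤ 1 := by
  have hs : ∀ i, ![1, 1, √2] i ≠ 0 := by
    intro i; fin_cases i <;> simp
  obtain ⟨n, hn⟩ := exists_norm_sub_rectangular_lattice_le v hs
  refine ⟨n 0, n 1, n 2, ?_⟩
  have hdiag : √(∑ i, ![1, 1, √2] i ^ 2) / 2 = 1 := by
    have h4 : (4 : ℝ) = 2 ^ 2 := by norm_num
    simp only [Fin.sum_univ_three, Matrix.cons_val_zero, Matrix.cons_val_one, Matrix.cons_val_two]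
    norm_num [h4]
  convert hn.trans_eq hdiag using 4
  ext i; fin_cases i <;> simp
end
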